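/- arXiv:1204.0934 — 2 statements merged into one kernel-verified Lean document; each statement's English description precedes it below -/
import Mathlib

section
/- Let n ≥ 1, let ν be a real number, let m, p, q be integers with 0 ≤ q ≤ m and p ≥ 0, and let h be a polynomial on ℂⁿ which is harmonic (as a function on ℝ^{2n}) and homogeneous of degree p in z and degree q in z̄. Then the smooth function f(z) = (1 − |z|²)^{ν−m} P_{m−q}^{(n+p+q−1, 2(ν−m)−n)}(1 − 2|z|²) h(z, z̄) on the unit ball 𝔹ⁿ satisfies H_ν f = (4ν(2m+n) − 4m(m+n)) f, i.e. f is an eigenfunction of the magnetic Schrödinger operator H_ν with eigenvalue ε_m^{ν,n} = 4ν(2m+n) − 4m(m+n). -/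
open MeasureTheory Complex Metric
open scoped BigOperators ComplexConjugate

noncomputable section

/-- `ℂⁿ` with its Euclidean (Hermitian) inner-product structure. -/
abbrev En (n : ℕ) := EuclideanSpace ℂ (Fin n)

instance (n : ℕ) : MeasurableSpace (En n) := borel _
instance (n : ℕ) : BorelSpace (En n) := ⟨rfl⟩

/-- Generalized binomial coefficient `C(a,k) = (a-k+1)_k / k!`. -/
def genBinom (a : ℝ) (k : ℕ) : ℝ := (ascPochhammer ℝ k).eval (a - k + 1) / (Nat.factorial k)

/-- Jacobi polynomial
`P_m^{(α,β)}(x) = Σ_{s=0}^m C(m+α, m-s) C(m+β, s) ((x-1)/2)^s ((x+1)/2)^{m-s}`. -/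
def jacobiP (m : ℕ) (α β : ℝ) (x : ℝ) : ℝ :=
  ∑ s ∈ Finset.range (m + 1),
    genBinom (m + α) (m - s) * genBinom (m + β) s * ((x - 1) / 2) ^ s * ((x + 1) / 2) ^ (m - s)

/-- The Hermitian pairing `⟨z,w⟩ = Σ_j z_j conj (w_j)` used in the paper. -/
def hinner {n : ℕ} (z w : En n) : ℂ := ∑ j, z j * conj (w j)

/-- Wirtinger derivative `∂/∂z_j = (∂/∂x_j - i ∂/∂y_j)/2`. -/
def wd {n : ℕ} (f : En n → ℂ) (z : En n) (j : Fin n) : ℂ :=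
  (fderiv ℝ f z (EuclideanSpace.single j 1)
    - Complex.I * fderiv ℝ f z (EuclideanSpace.single j Complex.I)) / 2

/-- Wirtinger derivative `∂/∂z̄_j = (∂/∂x_j + i ∂/∂y_j)/2`. -/
def wdbar {n : ℕ} (f : En n → ℂ) (z : En n) (j : Fin n) : ℂ :=
  (fderiv ℝ f z (EuclideanSpace.single j 1)
    + Complex.I * fderiv ℝ f z (EuclideanSpace.single j Complex.I)) / 2

/-- The magnetic Schrödinger operator
`H_ν = -4(1-|z|²)[ Σ_{i,j} (δ_{ij} - z_i z̄_j) ∂²/∂z_i∂z̄_j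
      + ν Σ_j (z_j ∂/∂z_j - z̄_j ∂/∂z̄_j) + ν² ] + 4ν²`. -/
def Hnu {n : ℕ} (ν : ℝ) (f : En n → ℂ) (z : En n) : ℂ :=
  -4 * (1 - (‖z‖ : ℂ) ^ 2) *
      ((∑ i, ∑ j, ((if i = j then 1 else 0) - z i * conj (z j)) * wd (fun w => wdbar f w j) z i)
        + (ν : ℂ) * (∑ j, (z j * wd f z j - conj (z j) * wdbar f z j))
        + (ν : ℂ) ^ 2 * f z)
    + 4 * (ν : ℂ) ^ 2 * f z

/-- `h` belongs to (the solid extension of) `H(p,q)`: it is a smooth function on `ℂⁿ`,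
harmonic as a function on `ℝ^{2n}` (the Euclidean Laplacian is `4 Σ_j ∂²/∂z_j∂z̄_j`),
and homogeneous of degree `p` in `z` and degree `q` in `z̄`. -/
structure InHpq (n p q : ℕ) (h : En n → ℂ) : Prop where
  smooth : ContDiff ℝ (⊤ : ℕ∞) h
  harmonic : ∀ z, ∑ j, wd (fun w => wdbar h w j) z j = 0
  bihom : ∀ (c : ℂ) (z : En n), h (c • z) = c ^ p * (conj c) ^ q * h z

lemma genBinom_succ (a : ℝ) (j : ℕ) :
    ((j : ℝ) + 1) * genBinom a (j + 1) = (a - j) * genBinom a j := by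
  unfold genBinom
  rw [ascPochhammer_succ_left]
  simp only [Polynomial.eval_mul, Polynomial.eval_comp, Polynomial.eval_add, Polynomial.eval_X,
    Polynomial.eval_one, Nat.factorial_succ, Nat.cast_mul, Nat.cast_add, Nat.cast_one]
  have h1 : a - (↑j + 1) + 1 = a - j := by ring
  rw [h1]
  have hfac : (j.factorial : ℝ) ≠ 0 := Nat.cast_ne_zero.mpr (Nat.factorial_ne_zero j)
  field_simp

/-- Coefficients of the Jacobi polynomial. -/
def jacCoe (k : ℕ) (α β : ℝ) (s : ℕ) : ℝ := genBinom (↑k + α) (k - s) * genBinom (↑k + β) s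

def jacCoe1 (k : ℕ) (α β : ℝ) (s : ℕ) : ℝ :=
  (((s : ℝ) + 1) * jacCoe k α β (s + 1) + ((k - s : ℕ) : ℝ) * jacCoe k α β s) / 2

def jacCoe2 (k : ℕ) (α β : ℝ) (s : ℕ) : ℝ :=
  (((s : ℝ) + 1) * jacCoe1 k α β (s + 1) + ((k - 1 - s : ℕ) : ℝ) * jacCoe1 k α β s) / 2

def jacobiD (k : ℕ) (α β x : ℝ) : ℝ :=
  ∑ s ∈ Finset.range k, jacCoe1 k α β s * ((x - 1) / 2) ^ s * ((x + 1) / 2) ^ (k - 1 - s)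

def jacobiDD (k : ℕ) (α β x : ℝ) : ℝ :=
  ∑ s ∈ Finset.range (k - 1), jacCoe2 k α β s * ((x - 1) / 2) ^ s * ((x + 1) / 2) ^ (k - 2 - s)

lemma jc_rec (k : ℕ) (α β : ℝ) (s : ℕ) (hs : s + 1 ≤ k) :
    (α + s + 1) * ((s : ℝ) + 1) * jacCoe k α β (s + 1)
      = ((k : ℝ) - s) * ((k : ℝ) + β - s) * jacCoe k α β s := by
  have h2 := genBinom_succ ((k : ℝ) + β) s
  have h1 := genBinom_succ ((k : ℝ) + α) (k - s - 1)
  have e : k - s - 1 + 1 = k - s := by omega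
  rw [e] at h1
  have e2 : ((k - s - 1 : ℕ) : ℝ) = (k : ℝ) - s - 1 := by
    rw [Nat.cast_sub (by omega : 1 ≤ k - s), Nat.cast_sub (by omega : s ≤ k)]
    push_cast; ring
  rw [e2] at h1
  have e3 : k - (s + 1) = k - s - 1 := by omega
  unfold jacCoe
  rw [e3]
  have e4 : (k : ℝ) + α - ((k : ℝ) - s - 1) = α + s + 1 := by ring
  rw [e4] at h1
  -- h1 : (k - s - 1 + 1) * genBinom (k+α) (k-s) = (α+s+1) * genBinom (k+α) (k-s-1)
  -- h2 : (s+1) * genBinom (k+β) (s+1) = (k+β-s) * genBinom (k+β) s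
  linear_combination (-((s:ℝ)+1) * genBinom ((k:ℝ)+β) (s+1)) * h1
    + (((k:ℝ) - s) * genBinom ((k:ℝ)+α) (k-s)) * h2

lemma hasDerivAt_sumform (K : ℕ) (e : ℕ → ℝ) (x : ℝ) :
    HasDerivAt (fun y => ∑ s ∈ Finset.range (K + 1), e s * ((y - 1) / 2) ^ s * ((y + 1) / 2) ^ (K - s))
      (∑ s ∈ Finset.range K,
        ((((s : ℝ) + 1) * e (s + 1) + ((K - s : ℕ) : ℝ) * e s) / 2)
          * ((x - 1) / 2) ^ s * ((x + 1) / 2) ^ (K - 1 - s)) x := by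
  have hu : HasDerivAt (fun y : ℝ => (y - 1) / 2) (1 / 2) x :=
    ((hasDerivAt_id x).sub_const 1).div_const 2
  have hv : HasDerivAt (fun y : ℝ => (y + 1) / 2) (1 / 2) x :=
    ((hasDerivAt_id x).add_const 1).div_const 2
  have hterm : ∀ s ∈ Finset.range (K + 1),
      HasDerivAt (fun y => e s * ((y - 1) / 2) ^ s * ((y + 1) / 2) ^ (K - s))
        ((e s * ((s : ℝ) * ((x - 1) / 2) ^ (s - 1) * (1 / 2))) * ((x + 1) / 2) ^ (K - s)
          + (e s * ((x - 1) / 2) ^ s)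
              * (((K - s : ℕ) : ℝ) * ((x + 1) / 2) ^ (K - s - 1) * (1 / 2))) x := by
    intro s _
    exact ((hu.pow s).const_mul (e s)).mul (hv.pow (K - s))
  have total := HasDerivAt.fun_sum hterm
  refine total.congr_deriv ?_
  symm
  rw [Finset.sum_add_distrib]
  rw [Finset.sum_range_succ' (fun s =>
    (e s * ((s : ℝ) * ((x - 1) / 2) ^ (s - 1) * (1 / 2))) * ((x + 1) / 2) ^ (K - s)) K]
  rw [Finset.sum_range_succ (fun s =>
    (e s * ((x - 1) / 2) ^ s) * (((K - s : ℕ) : ℝ) * ((x + 1) / 2) ^ (K - s - 1) * (1 / 2))) K]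
  simp only [Nat.cast_zero, zero_mul, mul_zero, zero_add, add_zero, Nat.sub_self, pow_zero]
  rw [← Finset.sum_add_distrib]
  apply Finset.sum_congr rfl
  intro s hs
  have hsK := Finset.mem_range.mp hs
  rw [show K - (s + 1) = K - 1 - s from by omega, show K - s - 1 = K - 1 - s from by omega,
    show s + 1 - 1 = s from by omega]
  have hc : ((K - s : ℕ) : ℝ) = (K : ℝ) - s := by rw [Nat.cast_sub (by omega)]
  rw [hc]
  push_cast
  ring

lemma hasDerivAt_jacobiP (k : ℕ) (α β x : ℝ) :
    HasDerivAt (jacobiP k α β) (jacobiD k α β x) x := by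
  exact hasDerivAt_sumform k (jacCoe k α β) x

lemma hasDerivAt_jacobiD (k : ℕ) (α β x : ℝ) :
    HasDerivAt (jacobiD k α β) (jacobiDD k α β x) x := by
  cases k with
  | zero =>
      simp only [jacobiD, jacobiDD, Finset.range_zero, Finset.sum_empty]
      exact hasDerivAt_const x 0
  | succ K =>
      exact hasDerivAt_sumform K (jacCoe1 (K + 1) α β) x

lemma coeff_main (k : ℕ) (α β : ℝ) (s : ℕ) (hs : s + 2 ≤ k) :
    -4 * jacCoe2 k α β s - 2 * (β + 1) * jacCoe1 k α β s - 2 * (α + 1) * jacCoe1 k α β (s + 1)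
      + k * (k + α + β + 1) * jacCoe k α β (s + 1) = 0 := by
  have h1 := jc_rec k α β s (by omega)
  have h2 := jc_rec k α β (s + 1) (by omega)
  push_cast at h2
  unfold jacCoe2 jacCoe1
  rw [Nat.cast_sub (by omega : s ≤ k), Nat.cast_sub (by omega : s + 1 ≤ k),
    Nat.cast_sub (by omega : s ≤ k - 1), Nat.cast_sub (by omega : 1 ≤ k)]
  push_cast
  linear_combination h1 - h2

lemma coeff_top (k : ℕ) (α β : ℝ) (hk : 1 ≤ k) :
    -2 * (β + 1) * jacCoe1 k α β (k - 1) + k * (k + α + β + 1) * jacCoe k α β k = 0 := by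
  have h1 := jc_rec k α β (k - 1) (by omega)
  rw [show k - 1 + 1 = k from by omega] at h1
  rw [Nat.cast_sub hk] at h1
  unfold jacCoe1
  rw [show k - 1 + 1 = k from by omega, Nat.cast_sub (by omega : k - 1 ≤ k),
    Nat.cast_sub hk]
  push_cast
  linear_combination h1

lemma coeff_bot (k : ℕ) (α β : ℝ) (hk : 1 ≤ k) :
    -2 * (α + 1) * jacCoe1 k α β 0 + k * (k + α + β + 1) * jacCoe k α β 0 = 0 := by
  have h1 := jc_rec k α β 0 (by omega)
  push_cast at h1
  unfold jacCoe1
  rw [Nat.cast_sub (by omega : 0 ≤ k)]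
  push_cast
  linear_combination -h1

lemma jacobi_ode (k : ℕ) (α β x : ℝ) :
    (1 - x ^ 2) * jacobiDD k α β x + (β - α - (α + β + 2) * x) * jacobiD k α β x
      + k * (k + α + β + 1) * jacobiP k α β x = 0 := by
  cases k with
  | zero =>
      simp [jacobiD, jacobiDD, jacobiP]
  | succ K =>
      set u : ℝ := (x - 1) / 2 with hu
      set v : ℝ := (x + 1) / 2 with hv
      have huv : (1 : ℝ) - x ^ 2 = -4 * (u * v) := by rw [hu, hv]; ring
      have hco : β - α - (α + β + 2) * x = -2 * (β + 1) * u + -2 * (α + 1) * v := by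
        rw [hu, hv]; ring
      have hA : (1 - x ^ 2) * jacobiDD (K + 1) α β x
          = ∑ s ∈ Finset.range K, (-4 * jacCoe2 (K + 1) α β s) * u ^ (s + 1) * v ^ (K - s) := by
        unfold jacobiDD
        rw [huv, Finset.mul_sum]
        apply Finset.sum_congr (by norm_num) ?_
        intro s hs
        have hsK := Finset.mem_range.mp hs
        rw [show K + 1 - 2 - s = K - 1 - s from by omega,
          show K - s = (K - 1 - s) + 1 from by omega]
        rw [pow_succ, pow_succ]
        ring
      have hB : (β - α - (α + β + 2) * x) * jacobiD (K + 1) α β x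
          = (∑ s ∈ Finset.range (K + 1), (-2 * (β + 1) * jacCoe1 (K + 1) α β s) * u ^ (s + 1) * v ^ (K - s))
            + (∑ s ∈ Finset.range (K + 1), (-2 * (α + 1) * jacCoe1 (K + 1) α β s) * u ^ s * v ^ (K + 1 - s)) := by
        unfold jacobiD
        rw [hco, add_mul, Finset.mul_sum, Finset.mul_sum]
        congr 1
        · apply Finset.sum_congr rfl
          intro s hs
          rw [show K + 1 - 1 - s = K - s from by omega]
          ring
        · apply Finset.sum_congr rfl
          intro s hs
          have hsK := Finset.mem_range.mp hs
          rw [show K + 1 - 1 - s = K - s from by omega,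
            show K + 1 - s = (K - s) + 1 from by omega, pow_succ]
          ring
      have hC : ((K + 1 : ℕ) : ℝ) * ((K + 1 : ℕ) + α + β + 1) * jacobiP (K + 1) α β x
          = ∑ s ∈ Finset.range (K + 2),
              (((K + 1 : ℕ) : ℝ) * ((K + 1 : ℕ) + α + β + 1) * jacCoe (K + 1) α β s)
                * u ^ s * v ^ (K + 1 - s) := by
        unfold jacobiP
        rw [Finset.mul_sum]
        apply Finset.sum_congr rfl
        intro s hs
        show _ = _ * (jacCoe (K+1) α β s) * u ^ s * v ^ (K + 1 - s)
        unfold jacCoe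
        ring
      rw [hA, hB, hC]
      rw [Finset.sum_range_succ (fun s => (-2 * (β + 1) * jacCoe1 (K + 1) α β s) * u ^ (s + 1) * v ^ (K - s)) K]
      rw [Finset.sum_range_succ' (fun s => (-2 * (α + 1) * jacCoe1 (K + 1) α β s) * u ^ s * v ^ (K + 1 - s)) K]
      rw [Finset.sum_range_succ' (fun s =>
        (((K + 1 : ℕ) : ℝ) * ((K + 1 : ℕ) + α + β + 1) * jacCoe (K + 1) α β s) * u ^ s * v ^ (K + 1 - s)) (K + 1)]
      rw [Finset.sum_range_succ (fun s =>
        (((K + 1 : ℕ) : ℝ) * ((K + 1 : ℕ) + α + β + 1) * jacCoe (K + 1) α β (s + 1)) * u ^ (s + 1) * v ^ (K + 1 - (s + 1))) K]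
      have hmain : ∀ s ∈ Finset.range K,
          (-4 * jacCoe2 (K + 1) α β s) * u ^ (s + 1) * v ^ (K - s)
            + ((-2 * (β + 1) * jacCoe1 (K + 1) α β s) * u ^ (s + 1) * v ^ (K - s)
              + ((-2 * (α + 1) * jacCoe1 (K + 1) α β (s + 1)) * u ^ (s + 1) * v ^ (K + 1 - (s + 1))
                + (((K + 1 : ℕ) : ℝ) * ((K + 1 : ℕ) + α + β + 1) * jacCoe (K + 1) α β (s + 1)) * u ^ (s + 1) * v ^ (K + 1 - (s + 1)))) = 0 := by
        intro s hs
        have hsK := Finset.mem_range.mp hs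
        rw [show K + 1 - (s + 1) = K - s from by omega]
        have hcm := coeff_main (K + 1) α β s (by omega)
        push_cast
        push_cast at hcm
        linear_combination (u ^ (s + 1) * v ^ (K - s)) * hcm
      have htop : (-2 * (β + 1) * jacCoe1 (K + 1) α β K) * u ^ (K + 1) * v ^ (K - K)
            + (((K + 1 : ℕ) : ℝ) * ((K + 1 : ℕ) + α + β + 1) * jacCoe (K + 1) α β (K + 1)) * u ^ (K + 1) * v ^ (K + 1 - (K + 1)) = 0 := by
        have hct := coeff_top (K + 1) α β (by omega)
        rw [show K + 1 - 1 = K from by omega] at hct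
        rw [Nat.sub_self, Nat.sub_self, pow_zero]
        push_cast
        push_cast at hct
        linear_combination (u ^ (K + 1)) * hct
      have hbot : (-2 * (α + 1) * jacCoe1 (K + 1) α β 0) * u ^ 0 * v ^ (K + 1 - 0)
            + (((K + 1 : ℕ) : ℝ) * ((K + 1 : ℕ) + α + β + 1) * jacCoe (K + 1) α β 0) * u ^ 0 * v ^ (K + 1 - 0) = 0 := by
        have hcb := coeff_bot (K + 1) α β (by omega)
        push_cast
        push_cast at hcb
        linear_combination (v ^ (K + 1)) * hcb
      calc (∑ s ∈ Finset.range K, (-4 * jacCoe2 (K + 1) α β s) * u ^ (s + 1) * v ^ (K - s))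
            + ((∑ s ∈ Finset.range K, (-2 * (β + 1) * jacCoe1 (K + 1) α β s) * u ^ (s + 1) * v ^ (K - s))
                + (-2 * (β + 1) * jacCoe1 (K + 1) α β K) * u ^ (K + 1) * v ^ (K - K)
              + ((∑ s ∈ Finset.range K, (-2 * (α + 1) * jacCoe1 (K + 1) α β (s + 1)) * u ^ (s + 1) * v ^ (K + 1 - (s + 1)))
                + (-2 * (α + 1) * jacCoe1 (K + 1) α β 0) * u ^ 0 * v ^ (K + 1 - 0)))
            + ((∑ s ∈ Finset.range K, (((K + 1 : ℕ) : ℝ) * ((K + 1 : ℕ) + α + β + 1) * jacCoe (K + 1) α β (s + 1)) * u ^ (s + 1) * v ^ (K + 1 - (s + 1)))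
                + (((K + 1 : ℕ) : ℝ) * ((K + 1 : ℕ) + α + β + 1) * jacCoe (K + 1) α β (K + 1)) * u ^ (K + 1) * v ^ (K + 1 - (K + 1))
              + (((K + 1 : ℕ) : ℝ) * ((K + 1 : ℕ) + α + β + 1) * jacCoe (K + 1) α β 0) * u ^ 0 * v ^ (K + 1 - 0))
          = (∑ s ∈ Finset.range K,
              ((-4 * jacCoe2 (K + 1) α β s) * u ^ (s + 1) * v ^ (K - s)
                + ((-2 * (β + 1) * jacCoe1 (K + 1) α β s) * u ^ (s + 1) * v ^ (K - s)
                  + ((-2 * (α + 1) * jacCoe1 (K + 1) α β (s + 1)) * u ^ (s + 1) * v ^ (K + 1 - (s + 1))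
                    + (((K + 1 : ℕ) : ℝ) * ((K + 1 : ℕ) + α + β + 1) * jacCoe (K + 1) α β (s + 1)) * u ^ (s + 1) * v ^ (K + 1 - (s + 1))))))
            + (((-2 * (β + 1) * jacCoe1 (K + 1) α β K) * u ^ (K + 1) * v ^ (K - K)
                + (((K + 1 : ℕ) : ℝ) * ((K + 1 : ℕ) + α + β + 1) * jacCoe (K + 1) α β (K + 1)) * u ^ (K + 1) * v ^ (K + 1 - (K + 1)))
              + ((-2 * (α + 1) * jacCoe1 (K + 1) α β 0) * u ^ 0 * v ^ (K + 1 - 0)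
                + (((K + 1 : ℕ) : ℝ) * ((K + 1 : ℕ) + α + β + 1) * jacCoe (K + 1) α β 0) * u ^ 0 * v ^ (K + 1 - 0))) := by
            rw [Finset.sum_add_distrib, Finset.sum_add_distrib, Finset.sum_add_distrib]
            ring
        _ = 0 := by
            rw [Finset.sum_congr rfl hmain, Finset.sum_const_zero, htop, hbot]
            ring

/-- The radial profile. -/
def rad (k : ℕ) (α β σ t : ℝ) : ℝ := (1 - t) ^ σ * jacobiP k α β (1 - 2 * t)

def rad1 (k : ℕ) (α β σ t : ℝ) : ℝ :=
  -(σ * (1 - t) ^ (σ - 1)) * jacobiP k α β (1 - 2 * t)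
    + (1 - t) ^ σ * (-2 * jacobiD k α β (1 - 2 * t))

def rad2 (k : ℕ) (α β σ t : ℝ) : ℝ :=
  σ * (σ - 1) * (1 - t) ^ (σ - 2) * jacobiP k α β (1 - 2 * t)
    + 4 * σ * (1 - t) ^ (σ - 1) * jacobiD k α β (1 - 2 * t)
    + 4 * (1 - t) ^ σ * jacobiDD k α β (1 - 2 * t)

lemma hasDerivAt_inner_lin (t : ℝ) : HasDerivAt (fun t : ℝ => 1 - 2 * t) (-2) t := by
  simpa using (hasDerivAt_const t (1:ℝ)).fun_sub ((hasDerivAt_id t).const_mul (2:ℝ))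

lemma hasDerivAt_one_sub_rpow (σ : ℝ) {t : ℝ} (ht : t < 1) :
    HasDerivAt (fun t : ℝ => (1 - t) ^ σ) (-(σ * (1 - t) ^ (σ - 1))) t := by
  have h01 : (0:ℝ) < 1 - t := by linarith
  have hin : HasDerivAt (fun t : ℝ => 1 - t) (-1) t := by
    simpa using (hasDerivAt_const t (1:ℝ)).fun_sub (hasDerivAt_id t)
  have h := (Real.hasDerivAt_rpow_const (x := 1 - t) (p := σ) (Or.inl (ne_of_gt h01))).comp t hin
  refine h.congr_deriv ?_
  ring

lemma hasDerivAt_jacobiP_comp (k : ℕ) (α β t : ℝ) :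
    HasDerivAt (fun t : ℝ => jacobiP k α β (1 - 2 * t))
      (jacobiD k α β (1 - 2 * t) * (-2)) t :=
  by have := (hasDerivAt_jacobiP k α β (1 - 2 * t)).comp t (hasDerivAt_inner_lin t); exact this

lemma hasDerivAt_jacobiD_comp (k : ℕ) (α β t : ℝ) :
    HasDerivAt (fun t : ℝ => jacobiD k α β (1 - 2 * t))
      (jacobiDD k α β (1 - 2 * t) * (-2)) t :=
  by have := (hasDerivAt_jacobiD k α β (1 - 2 * t)).comp t (hasDerivAt_inner_lin t); exact this

lemma hasDerivAt_rad (k : ℕ) (α β σ : ℝ) {t : ℝ} (ht : t < 1) :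
    HasDerivAt (rad k α β σ) (rad1 k α β σ t) t := by
  have h := (hasDerivAt_one_sub_rpow σ ht).fun_mul (hasDerivAt_jacobiP_comp k α β t)
  refine h.congr_deriv ?_
  unfold rad1
  ring

lemma hasDerivAt_rad1 (k : ℕ) (α β σ : ℝ) {t : ℝ} (ht : t < 1) :
    HasDerivAt (rad1 k α β σ) (rad2 k α β σ t) t := by
  have h1 := ((hasDerivAt_one_sub_rpow (σ - 1) ht).const_mul (-σ)).fun_mul
    (hasDerivAt_jacobiP_comp k α β t)
  have h2 := (hasDerivAt_one_sub_rpow σ ht).fun_mul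
    ((hasDerivAt_jacobiD_comp k α β t).const_mul (-2))
  have h := h1.fun_add h2
  have heq : (fun t => -σ * (1 - t) ^ (σ - 1) * jacobiP k α β (1 - 2 * t)
      + (1 - t) ^ σ * (-2 * jacobiD k α β (1 - 2 * t))) = rad1 k α β σ := by
    funext y; unfold rad1; ring
  rw [heq] at h
  refine h.congr_deriv ?_
  unfold rad2
  rw [show σ - 1 - 1 = σ - 2 from by ring]
  ring

lemma rad_ode (n p q m : ℕ) (ν : ℝ) (hqm : q ≤ m) {t : ℝ} (ht : t < 1) :
    -4 * (1 - t) * (t * (1 - t) * rad2 (m - q) ((n:ℝ)+p+q-1) (2*(ν-(m:ℝ))-(n:ℝ)) (ν-(m:ℝ)) t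
        + ((n:ℝ) + p + q - (1 + (p:ℝ) + q) * t)
            * rad1 (m - q) ((n:ℝ)+p+q-1) (2*(ν-(m:ℝ))-(n:ℝ)) (ν-(m:ℝ)) t
        + (ν * ((p:ℝ) - q) - (p:ℝ) * q + ν^2)
            * rad (m - q) ((n:ℝ)+p+q-1) (2*(ν-(m:ℝ))-(n:ℝ)) (ν-(m:ℝ)) t)
      + 4 * ν^2 * rad (m - q) ((n:ℝ)+p+q-1) (2*(ν-(m:ℝ))-(n:ℝ)) (ν-(m:ℝ)) t
    = (4 * ν * (2*(m:ℝ)+(n:ℝ)) - 4 * (m:ℝ) * ((m:ℝ)+(n:ℝ)))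
        * rad (m - q) ((n:ℝ)+p+q-1) (2*(ν-(m:ℝ))-(n:ℝ)) (ν-(m:ℝ)) t := by
  have h01 : (0:ℝ) < 1 - t := by linarith
  set σ : ℝ := ν - (m:ℝ) with hσ
  set α : ℝ := (n:ℝ)+p+q-1 with hα
  set β : ℝ := 2*(ν-(m:ℝ))-(n:ℝ) with hβ
  set x : ℝ := 1 - 2 * t with hx
  set w : ℝ := (1 - t) ^ (σ - 2) with hw
  have e1 : (1 - t) ^ σ = w * (1 - t)^2 :=
    calc (1 - t) ^ σ = (1 - t) ^ ((σ - 2) + 2) := by rw [show (σ - 2) + 2 = σ from by ring]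
      _ = (1 - t) ^ (σ - 2) * (1 - t) ^ (2:ℝ) := Real.rpow_add h01 _ _
      _ = w * (1 - t)^2 := by
          rw [hw, show ((2:ℝ)) = ((2:ℕ):ℝ) from by norm_num, Real.rpow_natCast]
  have e2 : (1 - t) ^ (σ - 1) = w * (1 - t) :=
    calc (1 - t) ^ (σ - 1) = (1 - t) ^ ((σ - 2) + 1) := by rw [show (σ - 2) + 1 = σ - 1 from by ring]
      _ = (1 - t) ^ (σ - 2) * (1 - t) ^ (1:ℝ) := Real.rpow_add h01 _ _
      _ = w * (1 - t) := by rw [hw, Real.rpow_one]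
  have hode := jacobi_ode (m - q) α β x
  rw [Nat.cast_sub hqm] at hode
  unfold rad rad1 rad2
  rw [e1, e2, ← hw]
  linear_combination (-4 * w * (1-t)^3) * hode

namespace WCalc

variable {n : ℕ}

def projR (j : Fin n) : En n →L[ℝ] ℂ := (EuclideanSpace.proj j : En n →L[ℂ] ℂ).restrictScalars ℝ

lemma projR_apply (j : Fin n) (w : En n) : projR j w = w j := rfl

lemma hasFDerivAt_coord (j : Fin n) (z : En n) :
    HasFDerivAt (fun w : En n => w j) (projR j) z := (projR j).hasFDerivAt

def conjCoord (j : Fin n) : En n →L[ℝ] ℂ :=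
  (Complex.conjCLE : ℂ ≃L[ℝ] ℂ).toContinuousLinearMap.comp (projR j)

lemma conjCoord_apply (j : Fin n) (w : En n) : conjCoord j w = conj (w j) := rfl

lemma hasFDerivAt_conjCoord (j : Fin n) (z : En n) :
    HasFDerivAt (fun w : En n => conj (w j)) (conjCoord j) z := (conjCoord j).hasFDerivAt

def nsqD (z : En n) : En n →L[ℝ] ℝ := ∑ j, (2:ℕ) • ((innerSL ℝ (z j)).comp (projR j))

lemma hasFDerivAt_nsq (z : En n) : HasFDerivAt (fun w : En n => ‖w‖^2) (nsqD z) z := by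
  have he : (fun w : En n => ‖w‖^2) = fun w => ∑ j, ‖w j‖^2 := by
    funext w; rw [EuclideanSpace.norm_eq, Real.sq_sqrt (by positivity)]
  rw [he]
  exact HasFDerivAt.fun_sum fun j _ => HasFDerivAt.norm_sq (hasFDerivAt_coord j z)

lemma nsqD_single_one (z : En n) (j : Fin n) :
    nsqD z (EuclideanSpace.single j 1) = 2 * (z j).re := by
  unfold nsqD
  rw [ContinuousLinearMap.sum_apply]
  rw [Finset.sum_eq_single j]
  · simp [projR_apply, EuclideanSpace.single_apply, Complex.inner]
  · intro i _ hij
    simp [projR_apply, EuclideanSpace.single_apply, Complex.inner, hij]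
  · simp

lemma nsqD_single_I (z : En n) (j : Fin n) :
    nsqD z (EuclideanSpace.single j Complex.I) = 2 * (z j).im := by
  unfold nsqD
  rw [ContinuousLinearMap.sum_apply]
  rw [Finset.sum_eq_single j]
  · simp [projR_apply, EuclideanSpace.single_apply, Complex.inner]
  · intro i _ hij
    simp [projR_apply, EuclideanSpace.single_apply, Complex.inner, hij]
  · simp

lemma conj_eq' (a : ℂ) : conj a = (a.re : ℂ) - a.im * Complex.I := by
  rw [← Complex.re_add_im a]
  simp only [map_add, map_mul, Complex.conj_ofReal, Complex.conj_I]
  ring_nf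
  simp [Complex.ext_iff]

lemma wd_congr {f g : En n → ℂ} {z : En n} (hfg : f =ᶠ[nhds z] g) (j : Fin n) :
    wd f z j = wd g z j := by unfold wd; rw [hfg.fderiv_eq]

lemma wd_of_hasFDerivAt {f : En n → ℂ} {L : En n →L[ℝ] ℂ} {z : En n}
    (hf : HasFDerivAt f L z) (j : Fin n) :
    wd f z j = (L (EuclideanSpace.single j 1) - Complex.I * L (EuclideanSpace.single j Complex.I)) / 2 := by
  unfold wd; rw [hf.fderiv]

lemma wdbar_of_hasFDerivAt {f : En n → ℂ} {L : En n →L[ℝ] ℂ} {z : En n}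
    (hf : HasFDerivAt f L z) (j : Fin n) :
    wdbar f z j = (L (EuclideanSpace.single j 1) + Complex.I * L (EuclideanSpace.single j Complex.I)) / 2 := by
  unfold wdbar; rw [hf.fderiv]

lemma wd_coord (z : En n) (i j : Fin n) :
    wd (fun w : En n => w j) z i = if i = j then 1 else 0 := by
  rw [wd_of_hasFDerivAt (hasFDerivAt_coord j z)]
  simp only [projR_apply, EuclideanSpace.single_apply]
  by_cases hij : i = j
  · subst hij; simp [Complex.I_mul_I]
  · simp [Ne.symm hij, hij]

lemma wdbar_coord (z : En n) (i j : Fin n) :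
    wdbar (fun w : En n => w j) z i = 0 := by
  rw [wdbar_of_hasFDerivAt (hasFDerivAt_coord j z)]
  simp only [projR_apply, EuclideanSpace.single_apply]
  by_cases hij : i = j
  · subst hij; simp [Complex.I_mul_I]
  · simp [Ne.symm hij]

lemma wd_conjCoord (z : En n) (i j : Fin n) :
    wd (fun w : En n => conj (w j)) z i = 0 := by
  rw [wd_of_hasFDerivAt (hasFDerivAt_conjCoord j z)]
  simp only [conjCoord_apply, EuclideanSpace.single_apply]
  by_cases hij : i = j
  · subst hij; simp [Complex.conj_I, Complex.I_mul_I]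
  · simp [Ne.symm hij]

lemma wdbar_conjCoord (z : En n) (i j : Fin n) :
    wdbar (fun w : En n => conj (w j)) z i = if i = j then 1 else 0 := by
  rw [wdbar_of_hasFDerivAt (hasFDerivAt_conjCoord j z)]
  simp only [conjCoord_apply, EuclideanSpace.single_apply]
  by_cases hij : i = j
  · subst hij; simp [Complex.conj_I, Complex.I_mul_I]
  · simp [Ne.symm hij, hij]

lemma wd_mul {f g : En n → ℂ} {z : En n} (hf : DifferentiableAt ℝ f z)
    (hg : DifferentiableAt ℝ g z) (j : Fin n) :
    wd (fun w => f w * g w) z j = wd f z j * g z + f z * wd g z j := by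
  simp only [wd, fderiv_fun_mul hf hg, ContinuousLinearMap.add_apply,
    ContinuousLinearMap.smul_apply, smul_eq_mul]
  ring

lemma wdbar_mul {f g : En n → ℂ} {z : En n} (hf : DifferentiableAt ℝ f z)
    (hg : DifferentiableAt ℝ g z) (j : Fin n) :
    wdbar (fun w => f w * g w) z j = wdbar f z j * g z + f z * wdbar g z j := by
  simp only [wdbar, fderiv_fun_mul hf hg, ContinuousLinearMap.add_apply,
    ContinuousLinearMap.smul_apply, smul_eq_mul]
  ring

lemma wd_add {f g : En n → ℂ} {z : En n} (hf : DifferentiableAt ℝ f z)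
    (hg : DifferentiableAt ℝ g z) (j : Fin n) :
    wd (fun w => f w + g w) z j = wd f z j + wd g z j := by
  simp only [wd, fderiv_fun_add hf hg, ContinuousLinearMap.add_apply]
  ring

lemma wd_const_mul {f : En n → ℂ} {z : En n} (c : ℂ) (hf : DifferentiableAt ℝ f z) (j : Fin n) :
    wd (fun w => c * f w) z j = c * wd f z j := by
  simp only [wd, fderiv_const_mul hf c, ContinuousLinearMap.smul_apply, smul_eq_mul]
  ring

lemma wd_sum {s : Finset (Fin n)} {F : Fin n → En n → ℂ} {z : En n}
    (hF : ∀ j ∈ s, DifferentiableAt ℝ (F j) z) (i : Fin n) :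
    wd (fun w => ∑ j ∈ s, F j w) z i = ∑ j ∈ s, wd (F j) z i := by
  simp only [wd, fderiv_fun_sum hF, ContinuousLinearMap.sum_apply]
  rw [Finset.mul_sum, ← Finset.sum_sub_distrib, ← Finset.sum_div]

lemma hasFDerivAt_radial_mul {z : En n} {ρ : ℝ → ℝ} {ρ' : ℝ} (hρ : HasDerivAt ρ ρ' (‖z‖^2))
    {φ : En n → ℂ} (hφ : DifferentiableAt ℝ φ z) :
    HasFDerivAt (fun w => ((ρ (‖w‖^2) : ℝ) : ℂ) * φ w)
      (((ρ (‖z‖^2) : ℝ) : ℂ) • fderiv ℝ φ z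
        + φ z • (Complex.ofRealCLM.comp (ρ' • nsqD z))) z := by
  have hN : HasFDerivAt (fun w : En n => ρ (‖w‖^2)) (ρ' • nsqD z) z :=
    hρ.comp_hasFDerivAt z (hasFDerivAt_nsq z)
  have hNC : HasFDerivAt (fun w : En n => ((ρ (‖w‖^2) : ℝ) : ℂ))
      (Complex.ofRealCLM.comp (ρ' • nsqD z)) z := Complex.ofRealCLM.hasFDerivAt.comp z hN
  exact hNC.mul hφ.hasFDerivAt

lemma differentiableAt_radial_mul {z : En n} {ρ : ℝ → ℝ} {ρ' : ℝ} (hρ : HasDerivAt ρ ρ' (‖z‖^2))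
    {φ : En n → ℂ} (hφ : DifferentiableAt ℝ φ z) :
    DifferentiableAt ℝ (fun w => ((ρ (‖w‖^2) : ℝ) : ℂ) * φ w) z :=
  (hasFDerivAt_radial_mul hρ hφ).differentiableAt

lemma wd_radial_mul {z : En n} {ρ : ℝ → ℝ} {ρ' : ℝ} (hρ : HasDerivAt ρ ρ' (‖z‖^2))
    {φ : En n → ℂ} (hφ : DifferentiableAt ℝ φ z) (j : Fin n) :
    wd (fun w => ((ρ (‖w‖^2) : ℝ) : ℂ) * φ w) z j
      = (ρ' : ℂ) * conj (z j) * φ z + ((ρ (‖z‖^2) : ℝ) : ℂ) * wd φ z j := by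
  rw [wd_of_hasFDerivAt (hasFDerivAt_radial_mul hρ hφ)]
  simp only [ContinuousLinearMap.add_apply, ContinuousLinearMap.smul_apply,
    ContinuousLinearMap.comp_apply, Complex.ofRealCLM_apply, nsqD_single_one, nsqD_single_I,
    smul_eq_mul]
  rw [conj_eq' (z j)]
  unfold wd
  push_cast
  ring

lemma wdbar_radial_mul {z : En n} {ρ : ℝ → ℝ} {ρ' : ℝ} (hρ : HasDerivAt ρ ρ' (‖z‖^2))
    {φ : En n → ℂ} (hφ : DifferentiableAt ℝ φ z) (j : Fin n) :
    wdbar (fun w => ((ρ (‖w‖^2) : ℝ) : ℂ) * φ w) z j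
      = (ρ' : ℂ) * z j * φ z + ((ρ (‖z‖^2) : ℝ) : ℂ) * wdbar φ z j := by
  rw [wdbar_of_hasFDerivAt (hasFDerivAt_radial_mul hρ hφ)]
  simp only [ContinuousLinearMap.add_apply, ContinuousLinearMap.smul_apply,
    ContinuousLinearMap.comp_apply, Complex.ofRealCLM_apply, nsqD_single_one, nsqD_single_I,
    smul_eq_mul]
  conv_rhs => rw [show z j = (((z j).re : ℂ) + (z j).im * Complex.I) from (Complex.re_add_im (z j)).symm]
  unfold wdbar
  push_cast
  ring

lemma contDiff_wdbar {h : En n → ℂ} (hsm : ContDiff ℝ (⊤ : ℕ∞) h) (j : Fin n) :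
    ContDiff ℝ (⊤ : ℕ∞) (fun w => wdbar h w j) := by
  have hD := hsm.fderiv_right (m := (⊤ : ℕ∞)) (by simp)
  have hA : ContDiff ℝ (⊤ : ℕ∞) (fun w => fderiv ℝ h w (EuclideanSpace.single j 1)) :=
    hD.clm_apply contDiff_const
  have hB : ContDiff ℝ (⊤ : ℕ∞) (fun w => fderiv ℝ h w (EuclideanSpace.single j Complex.I)) :=
    hD.clm_apply contDiff_const
  exact (hA.add (contDiff_const.mul hB)).div_const 2

lemma contDiff_wd {h : En n → ℂ} (hsm : ContDiff ℝ (⊤ : ℕ∞) h) (j : Fin n) :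
    ContDiff ℝ (⊤ : ℕ∞) (fun w => wd h w j) := by
  have hD := hsm.fderiv_right (m := (⊤ : ℕ∞)) (by simp)
  have hA : ContDiff ℝ (⊤ : ℕ∞) (fun w => fderiv ℝ h w (EuclideanSpace.single j 1)) :=
    hD.clm_apply contDiff_const
  have hB : ContDiff ℝ (⊤ : ℕ∞) (fun w => fderiv ℝ h w (EuclideanSpace.single j Complex.I)) :=
    hD.clm_apply contDiff_const
  exact (hA.sub (contDiff_const.mul hB)).div_const 2

lemma clm_decomp (L : En n →L[ℝ] ℂ) (z : En n) :
    L z = ∑ j, (((z j).re : ℂ) * L (EuclideanSpace.single j 1)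
      + ((z j).im : ℂ) * L (EuclideanSpace.single j Complex.I)) := by
  have hsingle : ∀ j, (z j).re • EuclideanSpace.single j (1:ℂ)
      + (z j).im • EuclideanSpace.single j Complex.I = EuclideanSpace.single j (z j) := by
    intro j
    ext i
    simp only [Pi.add_apply, Pi.smul_apply, EuclideanSpace.single_apply]
    by_cases hij : i = j
    · subst hij; simp [Complex.real_smul, Complex.re_add_im]
    · simp [hij]
  have hz : z = ∑ j, ((z j).re • EuclideanSpace.single j (1:ℂ)
      + (z j).im • EuclideanSpace.single j Complex.I) := by
    rw [Finset.sum_congr rfl (fun j _ => hsingle j)]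
    ext i
    rw [WithLp.ofLp_sum, Finset.sum_apply]
    simp [EuclideanSpace.single_apply]
  conv_lhs => rw [hz]
  rw [map_sum]
  apply Finset.sum_congr rfl
  intro j _
  rw [map_add, L.map_smul, L.map_smul]
  simp [Complex.real_smul]

lemma helper1 (a D1 D2 : ℂ) :
    a * ((D1 - Complex.I * D2) / 2) + conj a * ((D1 + Complex.I * D2) / 2)
      = (a.re : ℂ) * D1 + (a.im : ℂ) * D2 := by
  rw [conj_eq' a]
  nth_rewrite 1 [show a = ((a.re : ℂ) + a.im * Complex.I) from (Complex.re_add_im a).symm]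
  linear_combination (-(a.im : ℂ) * D2) * Complex.I_sq

lemma helper2 (a D1 D2 : ℂ) :
    a * ((D1 - Complex.I * D2) / 2) - conj a * ((D1 + Complex.I * D2) / 2)
      = -Complex.I * ((-(a.im : ℂ)) * D1 + (a.re : ℂ) * D2) := by
  rw [conj_eq' a]
  nth_rewrite 1 [show a = ((a.re : ℂ) + a.im * Complex.I) from (Complex.re_add_im a).symm]
  ring

end WCalc

namespace WCalc

variable {n p q : ℕ} {h : En n → ℂ}

lemma smul_linear_hasDerivAt (z : En n) {c : ℝ → ℂ} {c' : ℂ} {t : ℝ} (hc : HasDerivAt c c' t) :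
    HasDerivAt (fun s => c s • z) (c' • z) t := by
  have hM := (((ContinuousLinearMap.id ℂ ℂ).smulRight z).restrictScalars ℝ).hasFDerivAt
    (x := c t)
  have := hM.comp_hasDerivAt t hc
  simpa [Function.comp_def] using this

lemma deriv_along (hh : InHpq n p q h) (z : En n) :
    fderiv ℝ h z z = (((p : ℂ)) + q) * h z := by
  have hdiff : DifferentiableAt ℝ h z := hh.smooth.differentiable (by simp) z
  have hc : HasDerivAt (fun t : ℝ => ((1 : ℂ) + t)) 1 0 := by
    simpa using (Complex.ofRealCLM.hasDerivAt (x := (0:ℝ))).const_add (1 : ℂ)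
  have hu : HasDerivAt (fun t : ℝ => ((1 : ℂ) + t) • z) ((1 : ℂ) • z) 0 :=
    smul_linear_hasDerivAt z hc
  have hu0 : ((1 : ℂ) + ((0:ℝ) : ℂ)) • z = z := by norm_num
  have h1 : HasFDerivAt h (fderiv ℝ h z) (((1 : ℂ) + ((0:ℝ) : ℂ)) • z) := by
    rw [hu0]; exact hdiff.hasFDerivAt
  have hL : HasDerivAt (fun t : ℝ => h (((1 : ℂ) + t) • z)) (fderiv ℝ h z z) 0 := by
    have := h1.comp_hasDerivAt 0 hu
    simpa [Function.comp_def] using this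
  have hR : HasDerivAt (fun t : ℝ => ((1 : ℂ) + t) ^ (p + q) * h z)
      ((((p + q : ℕ)) : ℂ) * h z) 0 := by
    have hpow := hasDerivAt_pow (p + q) ((1 : ℂ) + ((0:ℝ) : ℂ))
    have hcomp := hpow.scomp (0 : ℝ) hc
    have := hcomp.mul_const (h z)
    refine this.congr_deriv ?_
    symm
    push_cast
    simp
  have hfun : (fun t : ℝ => h (((1 : ℂ) + t) • z))
      = fun t : ℝ => ((1 : ℂ) + t) ^ (p + q) * h z := by
    funext t
    rw [hh.bihom ((1 : ℂ) + t) z,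
      show conj ((1 : ℂ) + (t : ℂ)) = (1 : ℂ) + t from by simp [Complex.conj_ofReal],
      ← pow_add]
  rw [hfun] at hL
  have := hL.unique hR
  rw [this]
  push_cast
  ring

lemma deriv_along_I (hh : InHpq n p q h) (z : En n) :
    fderiv ℝ h z (Complex.I • z) = (((p : ℂ)) - q) * Complex.I * h z := by
  have hdiff : DifferentiableAt ℝ h z := hh.smooth.differentiable (by simp) z
  have hc : HasDerivAt (fun t : ℝ => ((1 : ℂ) + t * Complex.I)) Complex.I 0 := by
    simpa using ((Complex.ofRealCLM.hasDerivAt (x := (0:ℝ))).mul_const Complex.I).const_add (1 : ℂ)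
  have hc2 : HasDerivAt (fun t : ℝ => ((1 : ℂ) - t * Complex.I)) (-Complex.I) 0 := by
    simpa using ((Complex.ofRealCLM.hasDerivAt (x := (0:ℝ))).mul_const Complex.I).const_sub (1 : ℂ)
  have hu : HasDerivAt (fun t : ℝ => ((1 : ℂ) + t * Complex.I) • z) (Complex.I • z) 0 :=
    smul_linear_hasDerivAt z hc
  have hu0 : ((1 : ℂ) + ((0:ℝ) : ℂ) * Complex.I) • z = z := by norm_num
  have h1 : HasFDerivAt h (fderiv ℝ h z) (((1 : ℂ) + ((0:ℝ) : ℂ) * Complex.I) • z) := by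
    rw [hu0]; exact hdiff.hasFDerivAt
  have hL : HasDerivAt (fun t : ℝ => h (((1 : ℂ) + t * Complex.I) • z))
      (fderiv ℝ h z (Complex.I • z)) 0 := by
    have := h1.comp_hasDerivAt 0 hu
    simpa [Function.comp_def] using this
  have hR : HasDerivAt (fun t : ℝ => ((1 : ℂ) + t * Complex.I) ^ p
        * ((1 : ℂ) - t * Complex.I) ^ q * h z)
      ((((p : ℂ)) - q) * Complex.I * h z) 0 := by
    have hpow1 := hasDerivAt_pow p ((1 : ℂ) + ((0:ℝ) : ℂ) * Complex.I)
    have hpow2 := hasDerivAt_pow q ((1 : ℂ) - ((0:ℝ) : ℂ) * Complex.I)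
    have hcomp1 := hpow1.scomp (0 : ℝ) hc
    have hcomp2 := hpow2.scomp (0 : ℝ) hc2
    have := (hcomp1.mul hcomp2).mul_const (h z)
    refine this.congr_deriv ?_
    symm
    simp only [Function.comp_apply, Complex.ofReal_zero, zero_mul, add_zero, sub_zero,
      one_pow, smul_eq_mul, mul_one]
    ring
  have hfun : (fun t : ℝ => h (((1 : ℂ) + t * Complex.I) • z))
      = fun t : ℝ => ((1 : ℂ) + t * Complex.I) ^ p * ((1 : ℂ) - t * Complex.I) ^ q * h z := by
    funext t
    rw [hh.bihom ((1 : ℂ) + t * Complex.I) z,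
      show conj ((1 : ℂ) + (t : ℂ) * Complex.I) = (1 : ℂ) - t * Complex.I from by
        simp [Complex.conj_ofReal, Complex.conj_I]; ring]
  rw [hfun] at hL
  exact hL.unique hR

lemma euler_both (hh : InHpq n p q h) (z : En n) :
    (∑ j, z j * wd h z j) + (∑ j, conj (z j) * wdbar h z j) = ((p : ℂ) + q) * h z
      ∧ (∑ j, z j * wd h z j) - (∑ j, conj (z j) * wdbar h z j) = ((p : ℂ) - q) * h z := by
  have hL : ∀ j, (fderiv ℝ h z) (EuclideanSpace.single j 1) = fderiv ℝ h z (EuclideanSpace.single j 1) := fun _ => rfl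
  constructor
  · rw [← Finset.sum_add_distrib]
    have : ∀ j ∈ Finset.univ, z j * wd h z j + conj (z j) * wdbar h z j
        = ((z j).re : ℂ) * (fderiv ℝ h z) (EuclideanSpace.single j 1)
          + ((z j).im : ℂ) * (fderiv ℝ h z) (EuclideanSpace.single j Complex.I) := by
      intro j _
      exact helper1 (z j) _ _
    rw [Finset.sum_congr rfl this, ← clm_decomp (fderiv ℝ h z) z, deriv_along hh z]
  · rw [← Finset.sum_sub_distrib]
    have : ∀ j ∈ Finset.univ, z j * wd h z j - conj (z j) * wdbar h z j
        = -Complex.I * ((-((z j).im : ℂ)) * (fderiv ℝ h z) (EuclideanSpace.single j 1)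
          + ((z j).re : ℂ) * (fderiv ℝ h z) (EuclideanSpace.single j Complex.I)) := by
      intro j _
      exact helper2 (z j) _ _
    rw [Finset.sum_congr rfl this, ← Finset.mul_sum]
    have hdec := clm_decomp (fderiv ℝ h z) (Complex.I • z)
    have happ : ∀ j, (Complex.I • z) j = Complex.I * z j := fun j => rfl
    have : ∑ j, ((-((z j).im : ℂ)) * (fderiv ℝ h z) (EuclideanSpace.single j 1)
          + ((z j).re : ℂ) * (fderiv ℝ h z) (EuclideanSpace.single j Complex.I))
        = fderiv ℝ h z (Complex.I • z) := by
      rw [hdec]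
      apply Finset.sum_congr rfl
      intro j _
      rw [happ j]
      simp [Complex.mul_re, Complex.mul_im]
    rw [this, deriv_along_I hh z]
    linear_combination (-(((p:ℂ)) - q) * h z) * Complex.I_sq

lemma euler_wd (hh : InHpq n p q h) (z : En n) :
    ∑ j, z j * wd h z j = (p : ℂ) * h z := by
  obtain ⟨h1, h2⟩ := euler_both hh z
  linear_combination (h1 + h2) / 2

lemma euler_wdbar (hh : InHpq n p q h) (z : En n) :
    ∑ j, conj (z j) * wdbar h z j = (q : ℂ) * h z := by
  obtain ⟨h1, h2⟩ := euler_both hh z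
  linear_combination (h1 - h2) / 2

lemma euler2 (hh : InHpq n p q h) (z : En n) :
    ∑ i, ∑ j, z i * conj (z j) * wd (fun w => wdbar h w j) z i
      = (p : ℂ) * q * h z := by
  have hdiffbar : ∀ (j : Fin n) (w : En n), DifferentiableAt ℝ (fun w => wdbar h w j) w :=
    fun j w => ((contDiff_wdbar hh.smooth j).differentiable (by simp)) w
  have hdiffh : ∀ w : En n, DifferentiableAt ℝ h w := hh.smooth.differentiable (by simp)
  have hsum : ∀ i, ∑ j, conj (z j) * wd (fun w => wdbar h w j) z i
      = (q : ℂ) * wd h z i := by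
    intro i
    have e : (fun w : En n => ∑ j, conj (w j) * wdbar h w j) = fun w => (q : ℂ) * h w :=
      funext fun w => euler_wdbar hh w
    have e2 : ∑ j, conj (z j) * wd (fun w => wdbar h w j) z i
        = wd (fun w : En n => ∑ j, conj (w j) * wdbar h w j) z i := by
      rw [wd_sum (F := fun j w => conj (w j) * wdbar h w j)
        (fun j _ => (((hasFDerivAt_conjCoord j z).differentiableAt).mul (hdiffbar j z))) i]
      apply Finset.sum_congr rfl
      intro j _
      rw [wd_mul ((hasFDerivAt_conjCoord j z).differentiableAt) (hdiffbar j z) i, wd_conjCoord]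
      ring
    rw [e2, e, wd_const_mul (q : ℂ) (hdiffh z) i]
  calc ∑ i, ∑ j, z i * conj (z j) * wd (fun w => wdbar h w j) z i
      = ∑ i, z i * ((q : ℂ) * wd h z i) := by
        apply Finset.sum_congr rfl
        intro i _
        rw [← hsum i, Finset.mul_sum]
        apply Finset.sum_congr rfl
        intro j _
        ring
    _ = (q : ℂ) * ∑ i, z i * wd h z i := by
        rw [Finset.mul_sum]
        apply Finset.sum_congr rfl
        intro i _
        ring
    _ = (p : ℂ) * q * h z := by rw [euler_wd hh z]; ring

end WCalc


/-- each `Φ`-type function built from a solid harmonic of bidegree `(p,q)`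
is an eigenfunction of the magnetic Schrödinger operator `H_ν` on the unit ball with
eigenvalue `ε_m^{ν,n} = 4ν(2m+n) - 4m(m+n)`. -/
theorem eigenfunction_of_Hnu
    (n : ℕ) (hn : 1 ≤ n) (ν : ℝ) (m p q : ℕ) (hqm : q ≤ m)
    (h : En n → ℂ) (hh : InHpq n p q h) :
    ∀ z ∈ ball (0 : En n) 1,
      Hnu ν (fun w => (((1 - ‖w‖ ^ 2) ^ (ν - m) : ℝ) : ℂ) *
          (jacobiP (m - q) (n + p + q - 1) (2 * (ν - m) - n) (1 - 2 * ‖w‖ ^ 2) : ℂ) * h w) z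
      = ((4 * ν * (2 * m + n) - 4 * m * (m + n) : ℝ) : ℂ) *
          ((((1 - ‖z‖ ^ 2) ^ (ν - m) : ℝ) : ℂ) *
            (jacobiP (m - q) (n + p + q - 1) (2 * (ν - m) - n) (1 - 2 * ‖z‖ ^ 2) : ℂ) * h z) := by
  intro z hz
  obtain ⟨hsm, hharm, hbihom⟩ := hh
  have hh' : InHpq n p q h := ⟨hsm, hharm, hbihom⟩
  have hz1 : ‖z‖ < 1 := by simpa [mem_ball, dist_zero_right] using hz
  have hz2 : ‖z‖ ^ 2 < 1 := by nlinarith [norm_nonneg z]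
  have hball : ∀ w : En n, w ∈ ball (0 : En n) 1 → ‖w‖ ^ 2 < 1 := by
    intro w hw
    have : ‖w‖ < 1 := by simpa [mem_ball, dist_zero_right] using hw
    nlinarith [norm_nonneg w]
  have hdh : ∀ w : En n, DifferentiableAt ℝ h w := hsm.differentiable (by simp)
  have hdbar : ∀ (j : Fin n) (w : En n), DifferentiableAt ℝ (fun w => wdbar h w j) w :=
    fun j w => ((WCalc.contDiff_wdbar hsm j).differentiable (by simp)) w
  set k : ℕ := m - q with hk
  set σ : ℝ := ν - (m : ℝ) with hσ
  set α : ℝ := (n : ℝ) + (p : ℝ) + (q : ℝ) - 1 with hα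
  set β : ℝ := 2 * σ - (n : ℝ) with hβ
  have hFeq : (fun w : En n => (((1 - ‖w‖ ^ 2) ^ σ : ℝ) : ℂ) *
      ((jacobiP k α β (1 - 2 * ‖w‖ ^ 2) : ℝ) : ℂ) * h w)
      = fun w : En n => ((rad k α β σ (‖w‖ ^ 2) : ℝ) : ℂ) * h w := by
    funext w
    simp only [rad, Complex.ofReal_mul]
  rw [hFeq]
  have hFz : (((1 - ‖z‖ ^ 2) ^ σ : ℝ) : ℂ) * ((jacobiP k α β (1 - 2 * ‖z‖ ^ 2) : ℝ) : ℂ) * h z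
      = ((rad k α β σ (‖z‖ ^ 2) : ℝ) : ℂ) * h z := by
    simp only [rad, Complex.ofReal_mul]
  rw [hFz]
  set F : En n → ℂ := fun w : En n => ((rad k α β σ (‖w‖ ^ 2) : ℝ) : ℂ) * h w with hF
  set A0 : ℂ := ((rad k α β σ (‖z‖ ^ 2) : ℝ) : ℂ) with hA0
  set A1 : ℂ := ((rad1 k α β σ (‖z‖ ^ 2) : ℝ) : ℂ) with hA1
  set A2 : ℂ := ((rad2 k α β σ (‖z‖ ^ 2) : ℝ) : ℂ) with hA2
  -- first Wirtinger derivatives of F on the ball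
  have hwdbarF : ∀ w ∈ ball (0 : En n) 1, ∀ j, wdbar F w j
      = ((rad1 k α β σ (‖w‖ ^ 2) : ℝ) : ℂ) * (w j * h w)
        + ((rad k α β σ (‖w‖ ^ 2) : ℝ) : ℂ) * wdbar h w j := by
    intro w hw j
    rw [hF]
    rw [WCalc.wdbar_radial_mul (hasDerivAt_rad k α β σ (hball w hw)) (hdh w) j]
    ring
  have hwdF : ∀ j, wd F z j
      = A1 * (starRingEnd ℂ) (z j) * h z + A0 * wd h z j := by
    intro j
    rw [hF, hA1, hA0]
    exact WCalc.wd_radial_mul (hasDerivAt_rad k α β σ hz2) (hdh z) j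
  -- second derivatives at z
  set V : Fin n → Fin n → ℂ := fun i j =>
    A2 * (starRingEnd ℂ) (z i) * (z j * h z)
      + A1 * ((if i = j then (1 : ℂ) else 0) * h z + z j * wd h z i)
      + (A1 * (starRingEnd ℂ) (z i) * wdbar h z j
        + A0 * wd (fun w => wdbar h w j) z i) with hV
  have hsec : ∀ i j, wd (fun w => wdbar F w j) z i = V i j := by
    intro i j
    have hcong : (fun w => wdbar F w j) =ᶠ[nhds z]
        (fun w => ((rad1 k α β σ (‖w‖ ^ 2) : ℝ) : ℂ) * (w j * h w)
          + ((rad k α β σ (‖w‖ ^ 2) : ℝ) : ℂ) * wdbar h w j) :=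
      Filter.eventuallyEq_of_mem (isOpen_ball.mem_nhds hz) (fun w hw => hwdbarF w hw j)
    rw [WCalc.wd_congr hcong i]
    have hd1 : DifferentiableAt ℝ (fun w : En n => w j * h w) z :=
      ((WCalc.hasFDerivAt_coord j z).differentiableAt).mul (hdh z)
    rw [WCalc.wd_add
      (WCalc.differentiableAt_radial_mul (hasDerivAt_rad1 k α β σ hz2) hd1)
      (WCalc.differentiableAt_radial_mul (hasDerivAt_rad k α β σ hz2) (hdbar j z)) i]
    rw [WCalc.wd_radial_mul (hasDerivAt_rad1 k α β σ hz2) hd1 i,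
      WCalc.wd_radial_mul (hasDerivAt_rad k α β σ hz2) (hdbar j z) i]
    rw [WCalc.wd_mul ((WCalc.hasFDerivAt_coord j z).differentiableAt) (hdh z) i,
      WCalc.wd_coord]
    try simp only [hV, hA0, hA1, hA2]
  set Rc : ℂ := ∑ i, z i * (starRingEnd ℂ) (z i) with hRc
  have hRval : Rc = ((‖z‖ ^ 2 : ℝ) : ℂ) := by
    rw [hRc]
    have hn2 : ‖z‖ ^ 2 = ∑ i, ‖z i‖ ^ 2 := by
      rw [EuclideanSpace.norm_eq, Real.sq_sqrt (by positivity)]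
    rw [hn2]
    push_cast
    apply Finset.sum_congr rfl
    intro i _
    rw [Complex.mul_conj]
    norm_cast
    rw [← Complex.sq_norm]
  -- splitting the double sum
  have hsplit : (∑ i, ∑ j, ((if i = j then (1:ℂ) else 0) - z i * (starRingEnd ℂ) (z j))
        * wd (fun w => wdbar F w j) z i)
      = (∑ i, V i i) - ∑ i, ∑ j, z i * (starRingEnd ℂ) (z j) * V i j := by
    rw [← Finset.sum_sub_distrib]
    apply Finset.sum_congr rfl
    intro i _
    have hterm : ∀ j ∈ Finset.univ, ((if i = j then (1:ℂ) else 0) - z i * (starRingEnd ℂ) (z j))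
        * wd (fun w => wdbar F w j) z i
        = (if i = j then V i j else 0) - z i * (starRingEnd ℂ) (z j) * V i j := by
      intro j _
      rw [hsec i j]
      by_cases hij : i = j <;> simp [hij] <;> try ring
    rw [Finset.sum_congr rfl hterm, Finset.sum_sub_distrib, Finset.sum_ite_eq]
    simp
  -- diagonal sum
  have hdiag : (∑ i, V i i)
      = A2 * h z * Rc + (n : ℂ) * (A1 * h z) + A1 * ((p : ℂ) * h z)
        + A1 * ((q : ℂ) * h z) + A0 * 0 := by
    have hterm : ∀ i ∈ Finset.univ, V i i
        = A2 * h z * (z i * (starRingEnd ℂ) (z i))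
          + A1 * h z
          + A1 * (z i * wd h z i)
          + A1 * ((starRingEnd ℂ) (z i) * wdbar h z i)
          + A0 * wd (fun w => wdbar h w i) z i := by
      intro i _
      simp only [hV, eq_self_iff_true, if_true]
      ring
    have s1 : (∑ i, A2 * h z * (z i * (starRingEnd ℂ) (z i))) = A2 * h z * Rc := by
      rw [hRc, ← Finset.mul_sum]
    have s2 : (∑ _i : Fin n, A1 * h z) = (n : ℂ) * (A1 * h z) := by
      rw [Finset.sum_const, Finset.card_univ, Fintype.card_fin, nsmul_eq_mul]
    have s3 : (∑ i, A1 * (z i * wd h z i)) = A1 * ((p : ℂ) * h z) := by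
      rw [← Finset.mul_sum, WCalc.euler_wd hh' z]
    have s4 : (∑ i, A1 * ((starRingEnd ℂ) (z i) * wdbar h z i)) = A1 * ((q : ℂ) * h z) := by
      rw [← Finset.mul_sum, WCalc.euler_wdbar hh' z]
    have s5 : (∑ i, A0 * wd (fun w => wdbar h w i) z i) = A0 * 0 := by
      rw [← Finset.mul_sum, hharm z]
    rw [Finset.sum_congr rfl hterm, Finset.sum_add_distrib, Finset.sum_add_distrib,
      Finset.sum_add_distrib, Finset.sum_add_distrib, s1, s2, s3, s4, s5]
  -- off-diagonal (weighted) sum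
  have hoff : (∑ i, ∑ j, z i * (starRingEnd ℂ) (z j) * V i j)
      = A2 * h z * Rc * Rc + A1 * h z * Rc + (A1 * ((p : ℂ) * h z)) * Rc
        + (A1 * Rc) * ((q : ℂ) * h z) + A0 * ((p : ℂ) * (q : ℂ) * h z) := by
    have hinner : ∀ i ∈ Finset.univ, (∑ j, z i * (starRingEnd ℂ) (z j) * V i j)
        = (A2 * h z * (z i * (starRingEnd ℂ) (z i))) * Rc
          + A1 * h z * (z i * (starRingEnd ℂ) (z i))
          + (A1 * (z i * wd h z i)) * Rc
          + (A1 * (z i * (starRingEnd ℂ) (z i))) * ((q : ℂ) * h z)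
          + (A0 * z i) * (∑ j, (starRingEnd ℂ) (z j) * wd (fun w => wdbar h w j) z i) := by
      intro i _
      have hterm : ∀ j ∈ Finset.univ, z i * (starRingEnd ℂ) (z j) * V i j
          = (A2 * h z * (z i * (starRingEnd ℂ) (z i))) * (z j * (starRingEnd ℂ) (z j))
            + (A1 * h z * z i) * ((starRingEnd ℂ) (z j) * (if i = j then (1:ℂ) else 0))
            + (A1 * (z i * wd h z i)) * (z j * (starRingEnd ℂ) (z j))
            + (A1 * (z i * (starRingEnd ℂ) (z i))) * ((starRingEnd ℂ) (z j) * wdbar h z j)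
            + (A0 * z i) * ((starRingEnd ℂ) (z j) * wd (fun w => wdbar h w j) z i) := by
        intro j _
        simp only [hV]
        ring
      have hite : (∑ j, (starRingEnd ℂ) (z j) * (if i = j then (1:ℂ) else 0))
          = (starRingEnd ℂ) (z i) := by
        have : ∀ j ∈ Finset.univ, (starRingEnd ℂ) (z j) * (if i = j then (1:ℂ) else 0)
            = if i = j then (starRingEnd ℂ) (z j) else 0 := by
          intro j _
          by_cases hij : i = j <;> simp [hij]
        rw [Finset.sum_congr rfl this, Finset.sum_ite_eq]
        simp
      have t1 : (∑ j, (A2 * h z * (z i * (starRingEnd ℂ) (z i))) * (z j * (starRingEnd ℂ) (z j)))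
          = (A2 * h z * (z i * (starRingEnd ℂ) (z i))) * Rc := by
        rw [hRc, ← Finset.mul_sum]
      have t2 : (∑ j, (A1 * h z * z i) * ((starRingEnd ℂ) (z j) * (if i = j then (1:ℂ) else 0)))
          = A1 * h z * (z i * (starRingEnd ℂ) (z i)) := by
        rw [← Finset.mul_sum, hite]
        ring
      have t3 : (∑ j, (A1 * (z i * wd h z i)) * (z j * (starRingEnd ℂ) (z j)))
          = (A1 * (z i * wd h z i)) * Rc := by
        rw [hRc, ← Finset.mul_sum]
      have t4 : (∑ j, (A1 * (z i * (starRingEnd ℂ) (z i))) * ((starRingEnd ℂ) (z j) * wdbar h z j))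
          = (A1 * (z i * (starRingEnd ℂ) (z i))) * ((q : ℂ) * h z) := by
        rw [← Finset.mul_sum, WCalc.euler_wdbar hh' z]
      have t5 : (∑ j, (A0 * z i) * ((starRingEnd ℂ) (z j) * wd (fun w => wdbar h w j) z i))
          = (A0 * z i) * (∑ j, (starRingEnd ℂ) (z j) * wd (fun w => wdbar h w j) z i) := by
        rw [← Finset.mul_sum]
      rw [Finset.sum_congr rfl hterm, Finset.sum_add_distrib, Finset.sum_add_distrib,
        Finset.sum_add_distrib, Finset.sum_add_distrib, t1, t2, t3, t4, t5]
    rw [Finset.sum_congr rfl hinner, Finset.sum_add_distrib, Finset.sum_add_distrib,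
      Finset.sum_add_distrib, Finset.sum_add_distrib]
    have u1 : (∑ i, (A2 * h z * (z i * (starRingEnd ℂ) (z i))) * Rc) = A2 * h z * Rc * Rc := by
      rw [← Finset.sum_mul]
      congr 1
      rw [hRc, ← Finset.mul_sum]
    have u2 : (∑ i, A1 * h z * (z i * (starRingEnd ℂ) (z i))) = A1 * h z * Rc := by
      rw [hRc, ← Finset.mul_sum]
    have u3 : (∑ i, (A1 * (z i * wd h z i)) * Rc) = (A1 * ((p : ℂ) * h z)) * Rc := by
      rw [← Finset.sum_mul]
      congr 1
      rw [← Finset.mul_sum, WCalc.euler_wd hh' z]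
    have u4 : (∑ i, (A1 * (z i * (starRingEnd ℂ) (z i))) * ((q : ℂ) * h z))
        = (A1 * Rc) * ((q : ℂ) * h z) := by
      rw [← Finset.sum_mul]
      congr 1
      rw [hRc, ← Finset.mul_sum]
    have u5 : (∑ i, (A0 * z i) * (∑ j, (starRingEnd ℂ) (z j) * wd (fun w => wdbar h w j) z i))
        = A0 * ((p : ℂ) * (q : ℂ) * h z) := by
      have e1 : ∀ i ∈ Finset.univ, (A0 * z i)
            * (∑ j, (starRingEnd ℂ) (z j) * wd (fun w => wdbar h w j) z i)
          = A0 * (∑ j, z i * (starRingEnd ℂ) (z j) * wd (fun w => wdbar h w j) z i) := by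
        intro i _
        rw [Finset.mul_sum, Finset.mul_sum]
        apply Finset.sum_congr rfl
        intro j _
        ring
      rw [Finset.sum_congr rfl e1, ← Finset.mul_sum, WCalc.euler2 hh' z]
      try ring
    rw [u1, u2, u3, u4, u5]
  -- first order part
  have hFS : (∑ j, (z j * wd F z j - (starRingEnd ℂ) (z j) * wdbar F z j))
      = A0 * ((p : ℂ) * h z) - A0 * ((q : ℂ) * h z) := by
    have hterm : ∀ j ∈ Finset.univ, z j * wd F z j - (starRingEnd ℂ) (z j) * wdbar F z j
        = A0 * (z j * wd h z j) - A0 * ((starRingEnd ℂ) (z j) * wdbar h z j) := by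
      intro j _
      rw [hwdF j, hwdbarF z hz j, ← hA0, ← hA1]
      ring
    rw [Finset.sum_congr rfl hterm, Finset.sum_sub_distrib, ← Finset.mul_sum, ← Finset.mul_sum,
      WCalc.euler_wd hh' z, WCalc.euler_wdbar hh' z]
  -- assemble
  have hFz0 : F z = A0 * h z := rfl
  rw [Hnu, hsplit, hdiag, hoff, hFS, hFz0, hRval]
  have hsc := rad_ode n p q m ν hqm hz2
  have hscC := congrArg (fun r : ℝ => (r : ℂ)) hsc
  push_cast at hscC ⊢
  rw [hA0, hA1, hA2] at *
  push_cast at hscC ⊢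
  linear_combination (h z) * hscC
end
end

section
/- Let n ≥ 1, let ν ≥ 0 be real, let λ ∈ ℂ and let θ ∈ ℂⁿ with |θ| = 1. Then the function z ↦ P_λ^ν(z,θ) = ((1 − |z|²)/|1 − ⟨z,θ⟩|²)^{(iλ+n)/2} ((1 − \overline{⟨z,θ⟩})/(1 − ⟨z,θ⟩))^ν on the unit ball 𝔹ⁿ (the powers taken with the principal branch, which is well defined since Re(1 − ⟨z,θ⟩) > 0 for |z| < 1) satisfies H_ν P_λ^ν(·,θ) = (λ² + 4ν² + n²) P_λ^ν(·,θ). -/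
open MeasureTheory Complex Metric
open scoped BigOperators ComplexConjugate

noncomputable section

/-!
On the ball, `P_λ^ν(·,θ) = exp g` with `s = (iλ + n)/2` and
`g = s log(1 - |z|²) - (s + ν) log(1 - ⟨z,θ⟩) + (ν - s) log(1 - ⟨θ,z⟩)`.
Hence `∂ⱼP = P ∂ⱼg`, `∂̄ⱼP = P ∂̄ⱼg` and `∂ᵢ∂̄ⱼP = P (∂ᵢg ∂̄ⱼg + ∂ᵢ∂̄ⱼg)`, where only the
first logarithm contributes to `∂ᵢ∂̄ⱼg`. Inserting this into `H_ν` leaves `P` times a rational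
function of `|z|²`, `⟨z,θ⟩` and `⟨θ,z⟩` (the sums over `j` collapse to these because
`|θ| = 1`), which equals `4s(n - s) + 4ν² = λ² + 4ν² + n²`.
-/

open Topology

namespace Complex

lemma log_mul_of_re_pos {x y : ℂ} (hx : 0 < x.re) (hy : 0 < y.re) :
    log (x * y) = log x + log y := by
  have hx' := abs_lt.mp (abs_arg_lt_pi_div_two_iff.mpr (Or.inl hx))
  have hy' := abs_lt.mp (abs_arg_lt_pi_div_two_iff.mpr (Or.inl hy))
  exact log_mul (ne_zero_of_re_pos hx) (ne_zero_of_re_pos hy)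
    ⟨by linarith, by linarith [Real.pi_pos]⟩

lemma log_div_of_re_pos {x y : ℂ} (hx : 0 < x.re) (hy : 0 < y.re) :
    log (x / y) = log x - log y := by
  have hinv : 0 < y⁻¹.re := by
    rw [inv_re]; exact div_pos hy (normSq_pos.mpr (ne_zero_of_re_pos hy))
  rw [div_eq_mul_inv, log_mul_of_re_pos hx hinv,
    log_inv _ (mem_slitPlane_iff_arg.mp (Or.inl hy)).1, sub_eq_add_neg]

end Complex

section

variable {n : ℕ}

lemma hinner_eq_inner (z w : En n) : hinner z w = inner ℂ w z := by
  simp [hinner, PiLp.inner_apply]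

lemma hinner_self (w : En n) : hinner w w = (‖w‖ : ℂ) ^ 2 := by
  rw [hinner_eq_inner, inner_self_eq_norm_sq_to_K]; rfl

lemma re_one_sub_hinner_pos {w θ : En n} (hw : ‖w‖ < 1) (hθ : ‖θ‖ ≤ 1) :
    0 < (1 - hinner w θ).re := by
  have h := (re_le_norm _).trans (norm_inner_le_norm θ w)
  rw [← hinner_eq_inner] at h
  rw [sub_re, one_re]
  nlinarith [norm_nonneg w]

lemma re_one_sub_norm_sq_pos {w : En n} (hw : ‖w‖ < 1) : 0 < (1 - (‖w‖ : ℂ) ^ 2).re := by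
  norm_cast
  nlinarith [norm_nonneg w]

lemma re_one_sub_conj_hinner_pos {w θ : En n} (hw : ‖w‖ < 1) (hθ : ‖θ‖ ≤ 1) :
    0 < (1 - conj (hinner w θ)).re := by
  simpa using re_one_sub_hinner_pos hw hθ

/-- The real-linear form `∑ⱼ (aⱼ dzⱼ + bⱼ dz̄ⱼ)` on `ℂⁿ`. -/
def wirtingerCLM (a b : Fin n → ℂ) : En n →L[ℝ] ℂ :=
  ∑ j, (a j • (EuclideanSpace.proj j : En n →L[ℂ] ℂ).restrictScalars ℝ
    + b j • conjCLE.toContinuousLinearMap.comp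
      ((EuclideanSpace.proj j : En n →L[ℂ] ℂ).restrictScalars ℝ))

@[simp]
lemma wirtingerCLM_apply (a b : Fin n → ℂ) (v : En n) :
    wirtingerCLM a b v = ∑ j, (a j * v j + b j * conj (v j)) := by
  simp [wirtingerCLM]

lemma wirtingerCLM_add (a b a' b' : Fin n → ℂ) :
    wirtingerCLM a b + wirtingerCLM a' b' = wirtingerCLM (a + a') (b + b') := by
  ext v
  simp only [add_apply, wirtingerCLM_apply, ← Finset.sum_add_distrib]
  exact Finset.sum_congr rfl fun j _ => by simp only [Pi.add_apply]; ring

lemma smul_wirtingerCLM (c : ℂ) (a b : Fin n → ℂ) :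
    c • wirtingerCLM a b = wirtingerCLM (c • a) (c • b) := by
  ext v
  simp only [smul_apply, wirtingerCLM_apply, smul_eq_mul, Finset.mul_sum]
  exact Finset.sum_congr rfl fun j _ => by simp only [Pi.smul_apply, smul_eq_mul]; ring

lemma conj_comp_wirtingerCLM (a b : Fin n → ℂ) :
    conjCLE.toContinuousLinearMap.comp (wirtingerCLM a b) = wirtingerCLM (star b) (star a) := by
  ext v
  simp only [ContinuousLinearMap.comp_apply, ContinuousLinearEquiv.coe_coe, conjCLE_apply,
    wirtingerCLM_apply, map_sum]
  exact Finset.sum_congr rfl fun j _ => by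
    simp only [map_add, map_mul, conj_conj, Pi.star_apply, star_def]; ring

def HasWirtingerDerivAt (f : En n → ℂ) (a b : Fin n → ℂ) (z : En n) : Prop :=
  HasFDerivAt f (wirtingerCLM a b) z

lemma wirtingerCLM_single (a b : Fin n → ℂ) (j : Fin n) (c : ℂ) :
    wirtingerCLM a b (EuclideanSpace.single j c) = a j * c + b j * conj c := by
  simp [PiLp.single_apply, apply_ite (starRingEnd ℂ), Finset.sum_add_distrib]

namespace HasWirtingerDerivAt

variable {f g : En n → ℂ} {a b a' b' : Fin n → ℂ} {z : En n}

lemma wd_eq (h : HasWirtingerDerivAt f a b z) (j : Fin n) : wd f z j = a j := by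
  rw [wd, h.fderiv, wirtingerCLM_single, wirtingerCLM_single]
  simp only [map_one, conj_I]
  linear_combination (b j - a j) / 2 * I_sq

lemma wdbar_eq (h : HasWirtingerDerivAt f a b z) (j : Fin n) : wdbar f z j = b j := by
  rw [wdbar, h.fderiv, wirtingerCLM_single, wirtingerCLM_single]
  simp only [map_one, conj_I]
  linear_combination (a j - b j) / 2 * I_sq

lemma add (hf : HasWirtingerDerivAt f a b z) (hg : HasWirtingerDerivAt g a' b' z) :
    HasWirtingerDerivAt (fun w => f w + g w) (a + a') (b + b') z := by
  unfold HasWirtingerDerivAt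
  rw [← wirtingerCLM_add]
  exact HasFDerivAt.add hf hg

lemma mul (hf : HasWirtingerDerivAt f a b z) (hg : HasWirtingerDerivAt g a' b' z) :
    HasWirtingerDerivAt (fun w => f w * g w) (f z • a' + g z • a) (f z • b' + g z • b) z := by
  unfold HasWirtingerDerivAt
  rw [← wirtingerCLM_add, ← smul_wirtingerCLM, ← smul_wirtingerCLM]
  exact hf.fun_mul hg

lemma comp {φ : ℂ → ℂ} {φ' : ℂ} (hφ : HasDerivAt φ φ' (f z))
    (hf : HasWirtingerDerivAt f a b z) :
    HasWirtingerDerivAt (fun w => φ (f w)) (φ' • a) (φ' • b) z := by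
  unfold HasWirtingerDerivAt
  rw [← smul_wirtingerCLM]
  exact hφ.comp_hasFDerivAt z hf

lemma star (hf : HasWirtingerDerivAt f a b z) :
    HasWirtingerDerivAt (fun w => conj (f w)) (star b) (star a) z := by
  unfold HasWirtingerDerivAt
  rw [← conj_comp_wirtingerCLM]
  exact conjCLE.toContinuousLinearMap.hasFDerivAt.comp z hf

lemma const_mul (c : ℂ) (hf : HasWirtingerDerivAt f a b z) :
    HasWirtingerDerivAt (fun w => c * f w) (c • a) (c • b) z :=
  hf.comp (hasDerivAt_id (f z) |>.const_mul c |>.congr_deriv (mul_one c))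

lemma sub (hf : HasWirtingerDerivAt f a b z) (hg : HasWirtingerDerivAt g a' b' z) :
    HasWirtingerDerivAt (fun w => f w - g w) (a - a') (b - b') z := by
  simpa only [sub_eq_add_neg, neg_one_smul, neg_mul, one_mul] using hf.add (hg.const_mul (-1))

lemma const_sub (c : ℂ) (hf : HasWirtingerDerivAt f a b z) :
    HasWirtingerDerivAt (fun w => c - f w) (-a) (-b) z := by
  simpa using hf.comp ((hasDerivAt_id (f z)).const_sub c)

lemma congr_of_eventuallyEq (hf : HasWirtingerDerivAt f a b z) (h : g =ᶠ[𝓝 z] f) :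
    HasWirtingerDerivAt g a b z :=
  HasFDerivAt.congr_of_eventuallyEq hf h

end HasWirtingerDerivAt

lemma hasWirtingerDerivAt_apply (j : Fin n) (z : En n) :
    HasWirtingerDerivAt (fun w => w j) (Pi.single j 1) 0 z := by
  have : (fun w : En n => w j) = wirtingerCLM (Pi.single j 1) 0 := by
    ext w; simp [Pi.single_apply]
  rw [HasWirtingerDerivAt, this]
  exact (wirtingerCLM _ _).hasFDerivAt

lemma hasWirtingerDerivAt_hinner_left (θ z : En n) :
    HasWirtingerDerivAt (fun w => hinner w θ) (star θ.ofLp) 0 z := by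
  have : (fun w : En n => hinner w θ) = wirtingerCLM (star θ.ofLp) 0 := by
    ext w; simp [hinner, mul_comm]
  rw [HasWirtingerDerivAt, this]
  exact (wirtingerCLM _ _).hasFDerivAt

lemma hasWirtingerDerivAt_norm_sq (z : En n) :
    HasWirtingerDerivAt (fun w => (‖w‖ : ℂ) ^ 2) (star z.ofLp) z.ofLp z := by
  have h := ofRealCLM.hasFDerivAt.comp z (hasStrictFDerivAt_norm_sq z).hasFDerivAt
  have hfun : (fun w : En n => (‖w‖ : ℂ) ^ 2) = ofRealCLM ∘ fun w => ‖w‖ ^ 2 := by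
    ext w; simp
  rw [HasWirtingerDerivAt, hfun]
  refine h.congr_fderiv ?_
  ext v
  have hsum : ∑ j, (conj (z j) * v j + z j * conj (v j)) =
      inner ℂ z v + conj (inner ℂ z v) := by
    simp [PiLp.inner_apply, map_sum, Finset.sum_add_distrib, mul_comm]
  simp only [ContinuousLinearMap.comp_apply, smul_apply, innerSL_apply_apply,
    wirtingerCLM_apply, Pi.star_apply, star_def, hsum, add_conj]
  have hre : inner ℝ z v = (inner ℂ z v).re := by
    simp [PiLp.inner_apply, Complex.inner, re_sum, mul_comm]
  rw [nsmul_eq_mul, ofRealCLM_apply, hre]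
  push_cast
  ring

lemma sum_sum_ite_sub_mul_mul {R : Type*} [CommRing R] (z w x y : Fin n → R) :
    ∑ i, ∑ j, ((if i = j then 1 else 0) - z i * w j) * (x i * y j) =
      x ⬝ᵥ y - (z ⬝ᵥ x) * (w ⬝ᵥ y) := by
  simp only [sub_mul, ite_mul, one_mul, zero_mul, Finset.sum_sub_distrib, Finset.sum_ite_eq,
    Finset.mem_univ, if_true, dotProduct, Finset.sum_mul_sum]
  congr 1
  exact Finset.sum_congr rfl fun i _ => Finset.sum_congr rfl fun j _ => by ring

lemma sum_sum_ite_sub_mul_ite {R : Type*} [CommRing R] (z w : Fin n → R) :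
    ∑ i, ∑ j, ((if i = j then 1 else 0) - z i * w j) * (if i = j then 1 else 0) =
      n - z ⬝ᵥ w := by
  simp [dotProduct, Finset.sum_sub_distrib]

lemma Hnu_eq_of_wirtinger {f : En n → ℂ} {z : En n} {E c d : ℂ} {a b : Fin n → ℂ} (ν : ℝ)
    (hf : f z = E) (hwd : ∀ j, wd f z j = E * a j) (hwdbar : ∀ j, wdbar f z j = E * b j)
    (hwd2 : ∀ i j, wd (fun w => wdbar f w j) z i =
      E * (a i * b j - c * ((if i = j then 1 else 0) + d * (conj (z i) * z j)))) :
    Hnu ν f z = -4 * (1 - (‖z‖ : ℂ) ^ 2) * E *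
        (a ⬝ᵥ b - (z.ofLp ⬝ᵥ a) * (star z.ofLp ⬝ᵥ b)
          - c * (n - (‖z‖ : ℂ) ^ 2 + d * ((‖z‖ : ℂ) ^ 2 - (‖z‖ : ℂ) ^ 4))
          + ν * (z.ofLp ⬝ᵥ a - star z.ofLp ⬝ᵥ b) + ν ^ 2)
      + 4 * ν ^ 2 * E := by
  have hr : z.ofLp ⬝ᵥ star z.ofLp = (‖z‖ : ℂ) ^ 2 := hinner_self z
  have hr' : star z.ofLp ⬝ᵥ z.ofLp = (‖z‖ : ℂ) ^ 2 := by rw [dotProduct_comm, hr]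
  have hsplit : ∀ i j, ((if i = j then 1 else 0) - z i * conj (z j)) *
      (E * (a i * b j - c * ((if i = j then 1 else 0) + d * (conj (z i) * z j)))) =
      E * (((if i = j then 1 else 0) - z.ofLp i * star z.ofLp j) * (a i * b j))
        - E * c * (((if i = j then 1 else 0) - z.ofLp i * star z.ofLp j) *
          (if i = j then 1 else 0))
        - E * c * d * (((if i = j then 1 else 0) - z.ofLp i * star z.ofLp j) *
          (star z.ofLp i * z.ofLp j)) := fun i j => by
    simp only [Pi.star_apply, star_def]; ring
  have hsecond : ∑ i, ∑ j, ((if i = j then 1 else 0) - z i * conj (z j)) *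
      wd (fun w => wdbar f w j) z i =
      E * (a ⬝ᵥ b - (z.ofLp ⬝ᵥ a) * (star z.ofLp ⬝ᵥ b)
        - c * (n - (‖z‖ : ℂ) ^ 2 + d * ((‖z‖ : ℂ) ^ 2 - (‖z‖ : ℂ) ^ 4))) := by
    simp only [hwd2, hsplit, Finset.sum_sub_distrib, ← Finset.mul_sum, sum_sum_ite_sub_mul_mul,
      sum_sum_ite_sub_mul_ite, hr, hr']
    ring
  have hfirst : ∑ j, (z j * wd f z j - conj (z j) * wdbar f z j) =
      E * (z.ofLp ⬝ᵥ a - star z.ofLp ⬝ᵥ b) := by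
    simp only [hwd, hwdbar, dotProduct, Finset.mul_sum, ← Finset.sum_sub_distrib, mul_sub,
      Pi.star_apply, star_def]
    exact Finset.sum_congr rfl fun j _ => by ring
  rw [Hnu, hsecond, hfirst, hf]
  ring

/-- `P_λ^ν(·, θ)`, with the exponent `s = (iλ + n)/2`. -/
def magneticPoissonKernel (θ : En n) (s ν : ℂ) (w : En n) : ℂ :=
  (((1 - ‖w‖ ^ 2) / ‖1 - hinner w θ‖ ^ 2 : ℝ) : ℂ) ^ s *
    ((1 - conj (hinner w θ)) / (1 - hinner w θ)) ^ ν

def magneticPoissonExponent (θ : En n) (s ν : ℂ) (w : En n) : ℂ :=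
  s * log (1 - (‖w‖ : ℂ) ^ 2) - (s + ν) * log (1 - hinner w θ)
    + (ν - s) * log (1 - conj (hinner w θ))

lemma magneticPoissonKernel_eq_exp {θ w : En n} (hθ : ‖θ‖ ≤ 1) (hw : ‖w‖ < 1) (s ν : ℂ) :
    magneticPoissonKernel θ s ν w = exp (magneticPoissonExponent θ s ν w) := by
  set A := 1 - hinner w θ with hA_def
  have hA : 0 < A.re := re_one_sub_hinner_pos hw hθ
  have hA' : 0 < (conj A).re := by rwa [conj_re]
  have hU : 0 < (1 - (‖w‖ : ℂ) ^ 2).re := re_one_sub_norm_sq_pos hw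
  have hAA : 0 < (A * conj A).re := by
    rw [mul_conj']; norm_cast; exact pow_pos (norm_pos_iff.mpr (ne_zero_of_re_pos hA)) 2
  have hR : (((1 - ‖w‖ ^ 2) / ‖A‖ ^ 2 : ℝ) : ℂ) = (1 - (‖w‖ : ℂ) ^ 2) / (A * conj A) := by
    rw [mul_conj']; push_cast; rfl
  have hQ : 1 - conj (hinner w θ) = conj A := by simp [hA_def]
  rw [magneticPoissonKernel, hR, hQ,
    cpow_def_of_ne_zero (div_ne_zero (ne_zero_of_re_pos hU) (ne_zero_of_re_pos hAA)),
    cpow_def_of_ne_zero (div_ne_zero (ne_zero_of_re_pos hA') (ne_zero_of_re_pos hA)),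
    ← exp_add, log_div_of_re_pos hU hAA, log_mul_of_re_pos hA hA', log_div_of_re_pos hA' hA,
    magneticPoissonExponent, hQ, ← hA_def]
  ring_nf

def magneticPoissonLogDz (θ : En n) (s ν : ℂ) (w : En n) : Fin n → ℂ :=
  (-s * (1 - (‖w‖ : ℂ) ^ 2)⁻¹) • star w.ofLp
    + ((s + ν) * (1 - hinner w θ)⁻¹) • star θ.ofLp

def magneticPoissonLogDzbar (θ : En n) (s ν : ℂ) (w : En n) : Fin n → ℂ :=
  (-s * (1 - (‖w‖ : ℂ) ^ 2)⁻¹) • w.ofLp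
    + ((s - ν) * (1 - conj (hinner w θ))⁻¹) • θ.ofLp

variable {θ z : En n} {s ν : ℂ}

lemma hasWirtingerDerivAt_magneticPoissonExponent (hθ : ‖θ‖ ≤ 1) (hz : ‖z‖ < 1) :
    HasWirtingerDerivAt (magneticPoissonExponent θ s ν) (magneticPoissonLogDz θ s ν z)
      (magneticPoissonLogDzbar θ s ν z) z := by
  have hU := ((hasWirtingerDerivAt_norm_sq z).const_sub 1).comp
    (hasDerivAt_log (Or.inl (re_one_sub_norm_sq_pos hz)))
  have hA := ((hasWirtingerDerivAt_hinner_left θ z).const_sub 1).comp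
    (hasDerivAt_log (Or.inl (re_one_sub_hinner_pos hz hθ)))
  have hA' := ((hasWirtingerDerivAt_hinner_left θ z).star.const_sub 1).comp
    (hasDerivAt_log (Or.inl (re_one_sub_conj_hinner_pos hz hθ)))
  convert ((hU.const_mul s).sub (hA.const_mul (s + ν))).add (hA'.const_mul (ν - s)) using 1
  · rfl
  · unfold magneticPoissonLogDz
    simp only [star_zero, neg_zero, smul_zero, add_zero]
    module
  · unfold magneticPoissonLogDzbar
    simp only [star_star, neg_zero, smul_zero, sub_zero]
    module

lemma magneticPoissonKernel_eventuallyEq_exp (hθ : ‖θ‖ ≤ 1) (hz : ‖z‖ < 1) :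
    magneticPoissonKernel θ s ν =ᶠ[𝓝 z] fun w => exp (magneticPoissonExponent θ s ν w) :=
  Filter.eventuallyEq_of_mem (isOpen_ball.mem_nhds (mem_ball_zero_iff.mpr hz))
    fun _ hw => magneticPoissonKernel_eq_exp hθ (mem_ball_zero_iff.mp hw) s ν

lemma hasWirtingerDerivAt_magneticPoissonKernel (hθ : ‖θ‖ ≤ 1) (hz : ‖z‖ < 1) :
    HasWirtingerDerivAt (magneticPoissonKernel θ s ν)
      (magneticPoissonKernel θ s ν z • magneticPoissonLogDz θ s ν z)
      (magneticPoissonKernel θ s ν z • magneticPoissonLogDzbar θ s ν z) z := by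
  rw [magneticPoissonKernel_eq_exp hθ hz]
  exact ((hasWirtingerDerivAt_magneticPoissonExponent hθ hz).comp (hasDerivAt_exp _))
    |>.congr_of_eventuallyEq (magneticPoissonKernel_eventuallyEq_exp hθ hz)

/- Only the `∂/∂z`-part enters the mixed derivatives `∂ᵢ∂̄ⱼ P`, so the `∂/∂z̄`-part is left
unspecified. -/
lemma exists_hasWirtingerDerivAt_magneticPoissonLogDzbar (hθ : ‖θ‖ ≤ 1) (hz : ‖z‖ < 1)
    (j : Fin n) :
    ∃ b, HasWirtingerDerivAt (fun w => magneticPoissonLogDzbar θ s ν w j)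
      (fun i => -s * (1 - (‖z‖ : ℂ) ^ 2)⁻¹ *
        ((if i = j then 1 else 0) + (1 - (‖z‖ : ℂ) ^ 2)⁻¹ * (conj (z i) * z j))) b z := by
  have hU := ((hasWirtingerDerivAt_norm_sq z).const_sub 1).comp
    (hasDerivAt_inv (ne_zero_of_re_pos (re_one_sub_norm_sq_pos hz)))
  have hA' := ((hasWirtingerDerivAt_hinner_left θ z).star.const_sub 1).comp
    (hasDerivAt_inv (ne_zero_of_re_pos (re_one_sub_conj_hinner_pos hz hθ)))
  have h := ((hU.mul (hasWirtingerDerivAt_apply j z)).const_mul (-s)).add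
    (hA'.const_mul ((s - ν) * θ j))
  constructor
  convert h using 1
  · ext w
    simp only [magneticPoissonLogDzbar, neg_mul, neg_smul, Pi.add_apply, Pi.neg_apply,
      Pi.smul_apply, smul_eq_mul]
    ring
  · ext i
    simp only [Pi.add_apply, Pi.smul_apply, Pi.neg_apply, Pi.star_apply, Pi.single_apply,
      smul_eq_mul, star_zero, Pi.zero_apply, star_def, ← inv_pow]
    split_ifs <;> ring

lemma wd_wdbar_magneticPoissonKernel (hθ : ‖θ‖ ≤ 1) (hz : ‖z‖ < 1) (i j : Fin n) :
    wd (fun w => wdbar (magneticPoissonKernel θ s ν) w j) z i =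
      magneticPoissonKernel θ s ν z *
        (magneticPoissonLogDz θ s ν z i * magneticPoissonLogDzbar θ s ν z j
          - s * (1 - (‖z‖ : ℂ) ^ 2)⁻¹ *
            ((if i = j then 1 else 0) + (1 - (‖z‖ : ℂ) ^ 2)⁻¹ * (conj (z i) * z j))) := by
  obtain ⟨b, hb⟩ :=
    exists_hasWirtingerDerivAt_magneticPoissonLogDzbar (s := s) (ν := ν) hθ hz j
  have hwdbar : (fun w => wdbar (magneticPoissonKernel θ s ν) w j) =ᶠ[𝓝 z]
      fun w => magneticPoissonKernel θ s ν w * magneticPoissonLogDzbar θ s ν w j :=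
    Filter.eventuallyEq_of_mem (isOpen_ball.mem_nhds (mem_ball_zero_iff.mpr hz)) fun w hw => by
      simpa using
        (hasWirtingerDerivAt_magneticPoissonKernel hθ (mem_ball_zero_iff.mp hw)).wdbar_eq j
  rw [(((hasWirtingerDerivAt_magneticPoissonKernel hθ hz).mul hb).congr_of_eventuallyEq
    hwdbar).wd_eq]
  simp only [neg_mul, Pi.add_apply, Pi.smul_apply, smul_eq_mul, mul_neg]
  ring

lemma Hnu_magneticPoissonKernel (hθ : ‖θ‖ = 1) (hz : ‖z‖ < 1) (s : ℂ) (ν : ℝ) :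
    Hnu ν (magneticPoissonKernel θ s ν) z =
      (4 * s * (n - s) + 4 * ν ^ 2) * magneticPoissonKernel θ s ν z := by
  have hK := hasWirtingerDerivAt_magneticPoissonKernel (s := s) (ν := ν) hθ.le hz
  rw [Hnu_eq_of_wirtinger ν rfl hK.wd_eq hK.wdbar_eq (wd_wdbar_magneticPoissonKernel hθ.le hz)]
  have hzz : z.ofLp ⬝ᵥ star z.ofLp = (‖z‖ : ℂ) ^ 2 := hinner_self z
  have hzz' : star z.ofLp ⬝ᵥ z.ofLp = (‖z‖ : ℂ) ^ 2 := by rw [dotProduct_comm, hzz]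
  have hzθ : z.ofLp ⬝ᵥ star θ.ofLp = hinner z θ := rfl
  have hθz : star θ.ofLp ⬝ᵥ z.ofLp = hinner z θ := dotProduct_comm _ _
  have hzθ' : star z.ofLp ⬝ᵥ θ.ofLp = conj (hinner z θ) := by
    rw [dotProduct_comm, hinner_eq_inner, inner_conj_symm, ← hinner_eq_inner]; rfl
  have hθθ : star θ.ofLp ⬝ᵥ θ.ofLp = 1 := by
    rw [dotProduct_comm]; exact (hinner_self θ).trans (by simp [hθ])
  have hU := ne_zero_of_re_pos (re_one_sub_norm_sq_pos hz)
  have hA := ne_zero_of_re_pos (re_one_sub_hinner_pos hz hθ.le)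
  have hA' : 1 - conj (hinner z θ) ≠ 0 :=
    ne_zero_of_re_pos (re_one_sub_conj_hinner_pos hz hθ.le)
  simp only [magneticPoissonLogDz, magneticPoissonLogDzbar, dotProduct_add,
    add_dotProduct, dotProduct_smul, smul_dotProduct, smul_eq_mul, hzz, hzz', hzθ, hθz, hzθ',
    hθθ]
  field_simp
  ring

end

theorem poisson_kernel_eigenfunction_general
    (n : ℕ) (ν : ℝ) (lam : ℂ) (θ : En n) (hθ : ‖θ‖ = 1) :
    ∀ z ∈ ball (0 : En n) 1,
      Hnu ν (fun w =>
          (((1 - ‖w‖ ^ 2) / ‖1 - hinner w θ‖ ^ 2 : ℝ) : ℂ) ^ ((Complex.I * lam + n) / 2) *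
            ((1 - conj (hinner w θ)) / (1 - hinner w θ)) ^ (ν : ℂ)) z
      = (lam ^ 2 + 4 * (ν : ℂ) ^ 2 + (n : ℂ) ^ 2) *
          ((((1 - ‖z‖ ^ 2) / ‖1 - hinner z θ‖ ^ 2 : ℝ) : ℂ) ^ ((Complex.I * lam + n) / 2) *
            ((1 - conj (hinner z θ)) / (1 - hinner z θ)) ^ (ν : ℂ)) := by
  intro z hz
  have heigen : lam ^ 2 + 4 * (ν : ℂ) ^ 2 + (n : ℂ) ^ 2 =
      4 * ((I * lam + n) / 2) * (n - (I * lam + n) / 2) + 4 * (ν : ℂ) ^ 2 := by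
    linear_combination lam ^ 2 * I_sq
  rw [heigen]
  exact Hnu_magneticPoissonKernel hθ (mem_ball_zero_iff.mp hz) _ ν

/-- the Poisson kernel `P_λ^ν(·,θ)` is an eigenfunction of `H_ν` with
eigenvalue `λ² + 4ν² + n²`. -/
theorem poisson_kernel_eigenfunction
    (n : ℕ) (hn : 1 ≤ n) (ν : ℝ) (hν : 0 ≤ ν) (lam : ℂ) (θ : En n) (hθ : ‖θ‖ = 1) :
    ∀ z ∈ ball (0 : En n) 1,
      Hnu ν (fun w =>
          (((1 - ‖w‖ ^ 2) / ‖1 - hinner w θ‖ ^ 2 : ℝ) : ℂ) ^ ((Complex.I * lam + n) / 2) *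
            ((1 - conj (hinner w θ)) / (1 - hinner w θ)) ^ (ν : ℂ)) z
      = (lam ^ 2 + 4 * (ν : ℂ) ^ 2 + (n : ℂ) ^ 2) *
          ((((1 - ‖z‖ ^ 2) / ‖1 - hinner z θ‖ ^ 2 : ℝ) : ℂ) ^ ((Complex.I * lam + n) / 2) *
            ((1 - conj (hinner z θ)) / (1 - hinner z θ)) ^ (ν : ℂ)) :=
  poisson_kernel_eigenfunction_general n ν lam θ hθ
end
end
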